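/- arXiv:1402.0060 — 7 statements merged into one kernel-verified Lean document; each statement's English description precedes it below -/
import Mathlib

section
/- Let q be a prime power and let S, S' ⊆ ℤ² be finite sets that are lattice equivalent. Then the toric codes C_S and C_{S'} over 𝔽_q are monomially equivalent. -/
/-- Embed a lattice point of `ℤ²` into the real plane. -/
def toRealPt (p : ℤ × ℤ) : ℝ × ℝ := ((p.1 : ℝ), (p.2 : ℝ))

/-- The lattice points of the (possibly degenerate) convex lattice polygon spanned by a
finite set `V` of points of `ℤ²`, i.e. the points of `ℤ²` lying in the convex hull of `V`. -/
def latticePts (V : Finset (ℤ × ℤ)) : Set (ℤ × ℤ) :=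
  {p | toRealPt p ∈ convexHull ℝ (toRealPt '' (V : Set (ℤ × ℤ)))}

/-- The integer affine map `T(x) = Mx + v` on `ℤ²`. -/
def affMap (M : Matrix (Fin 2) (Fin 2) ℤ) (v : ℤ × ℤ) (p : ℤ × ℤ) : ℤ × ℤ :=
  (M 0 0 * p.1 + M 0 1 * p.2 + v.1, M 1 0 * p.1 + M 1 1 * p.2 + v.2)

/-- Two subsets of `ℤ²` are lattice equivalent if some affine map `T(x) = Mx + v`,
with `M ∈ GL(2,ℤ)` and `v ∈ ℤ²`, maps the first bijectively onto the second. -/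
def LatticeEquiv (S S' : Set (ℤ × ℤ)) : Prop :=
  ∃ (M : Matrix (Fin 2) (Fin 2) ℤ) (v : ℤ × ℤ),
    IsUnit M.det ∧ Set.BijOn (affMap M v) S S'

/-- Evaluation of the Laurent monomial `x^{m₁} y^{m₂}` at a point of the torus `(F*)²`. -/
def evalMonomial {F : Type*} [Field F] (m : ℤ × ℤ) (t : Fˣ × Fˣ) : F :=
  ((t.1 ^ m.1 : Fˣ) : F) * ((t.2 ^ m.2 : Fˣ) : F)

/-- The toric code over `F` associated to a set `S ⊆ ℤ²` of exponent vectors: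
the span of the evaluation vectors of the monomials `x^{m₁} y^{m₂}`, `m ∈ S`. -/
def toricCode (F : Type*) [Field F] (S : Set (ℤ × ℤ)) :
    Submodule F ((Fˣ × Fˣ) → F) :=
  Submodule.span F ((fun m => evalMonomial m) '' S)

/-- The Hamming weight of a word: the number of nonzero coordinates. -/
noncomputable def hammingWt {X F : Type*} [Zero F] (c : X → F) : ℕ :=
  Set.ncard {x | c x ≠ 0}

/-- The minimum distance of a linear code: the least Hamming weight of a nonzero codeword. -/
noncomputable def minDist {F X : Type*} [Field F] (C : Submodule F (X → F)) : ℕ :=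
  sInf {w | ∃ c ∈ C, c ≠ 0 ∧ hammingWt c = w}

/-- Monomial equivalence of linear codes inside `F^X`. -/
def MonomiallyEquiv {F X : Type*} [Field F] (C₁ C₂ : Submodule F (X → F)) : Prop :=
  ∃ (π : Equiv.Perm X) (d : X → Fˣ),
    (C₂ : Set (X → F)) = (fun c x => (d x : F) * c (π x)) '' (C₁ : Set (X → F))

/-- The vertex sets of the fourteen polygons `P₆⁽ⁱ⁾`, `i = 1, …, 14`. -/
def P6 : ℕ → Finset (ℤ × ℤ)
  | 1 => {(0,0),(5,0)}
  | 2 => {(0,0),(4,0),(0,1)}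
  | 3 => {(0,0),(3,0),(1,1),(0,1)}
  | 4 => {(0,-1),(3,0),(0,1)}
  | 5 => {(-1,-1),(3,0),(0,1)}
  | 6 => {(0,0),(1,0),(3,3),(0,1)}
  | 7 => {(0,0),(0,1),(3,0),(3,-1)}
  | 8 => {(-1,0),(0,1),(2,0),(0,-1)}
  | 9 => {(0,-1),(2,0),(1,1),(0,1)}
  | 10 => {(0,-1),(2,0),(-1,2)}
  | 11 => {(-1,-1),(1,0),(1,1),(0,2)}
  | 12 => {(-1,0),(0,-1),(1,0),(1,1),(0,1)}
  | 13 => {(0,0),(2,0),(0,2)}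
  | 14 => {(0,0),(2,0),(2,1),(0,1)}
  | _ => ∅


/-- The group endomorphism of the torus induced by an integer matrix. -/
def latTorusMap {F : Type*} [Field F] (A : Matrix (Fin 2) (Fin 2) ℤ) (t : Fˣ × Fˣ) : Fˣ × Fˣ :=
  (t.1 ^ A 0 0 * t.2 ^ A 1 0, t.1 ^ A 0 1 * t.2 ^ A 1 1)

lemma latTorusMap_comp {F : Type*} [Field F] (A B : Matrix (Fin 2) (Fin 2) ℤ) (t : Fˣ × Fˣ) :
    latTorusMap A (latTorusMap B t) = latTorusMap (B * A) t := by
  simp only [latTorusMap, Matrix.mul_apply, Fin.sum_univ_two, mul_zpow, zpow_add, zpow_mul,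
    Prod.mk.injEq]
  exact ⟨mul_mul_mul_comm _ _ _ _, mul_mul_mul_comm _ _ _ _⟩

lemma latTorusMap_one {F : Type*} [Field F] (t : Fˣ × Fˣ) : latTorusMap 1 t = t := by
  simp [latTorusMap, Matrix.one_apply]

/-- ... If two finite subsets of `ℤ²` are lattice equivalent, then the associated
toric codes over `𝔽_q` are monomially equivalent. -/
theorem latticeEquiv_implies_monomiallyEquiv (q : ℕ) (hq : IsPrimePow q)
    (F : Type) [Field F] [Fintype F] (hF : Fintype.card F = q)
    (S S' : Finset (ℤ × ℤ)) (h : LatticeEquiv (S : Set (ℤ × ℤ)) (S' : Set (ℤ × ℤ))) :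
    MonomiallyEquiv (toricCode F (S : Set (ℤ × ℤ))) (toricCode F (S' : Set (ℤ × ℤ))) := by
  classical
  obtain ⟨M, v, hdet, hbij⟩ := h
  haveI : Invertible M := M.invertibleOfIsUnitDet hdet
  let π : Equiv.Perm (Fˣ × Fˣ) :=
    { toFun := latTorusMap M
      invFun := latTorusMap (⅟M)
      left_inv := fun t => by rw [latTorusMap_comp, mul_invOf_self, latTorusMap_one]
      right_inv := fun t => by rw [latTorusMap_comp, invOf_mul_self, latTorusMap_one] }
  let d : Fˣ × Fˣ → Fˣ := fun t => t.1 ^ v.1 * t.2 ^ v.2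
  let L : ((Fˣ × Fˣ) → F) →ₗ[F] ((Fˣ × Fˣ) → F) :=
    { toFun := fun c x => (d x : F) * c (π x)
      map_add' := fun a b => funext fun t => mul_add _ _ _
      map_smul' := fun a c => funext fun t => mul_left_comm _ _ _ }
  have key : ∀ m : ℤ × ℤ, L (evalMonomial m) = evalMonomial (affMap M v m) := by
    intro m
    funext t
    show (d t : F) * evalMonomial m (π t) = _
    simp only [evalMonomial, affMap, d, π, latTorusMap, Equiv.coe_fn_mk]
    simp only [← Units.val_zpow_eq_zpow_val, ← Units.val_mul]
    congr 1
    simp only [mul_zpow, zpow_add, zpow_mul]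
    simp only [mul_comm, mul_left_comm, mul_assoc]
  refine ⟨π, d, ?_⟩
  have himg : (S' : Set (ℤ × ℤ)) = affMap M v '' (S : Set (ℤ × ℤ)) := hbij.image_eq.symm
  have : toricCode F (S' : Set (ℤ × ℤ)) = Submodule.map L (toricCode F (S : Set (ℤ × ℤ))) := by
    rw [toricCode, toricCode, Submodule.map_span, himg, ← Set.image_comp, ← Set.image_comp]
    refine congrArg _ (Set.image_congr fun m _ => ?_)
    exact (key m).symm
  rw [this]
  rfl
end

section
/- Let q be a prime power and k, l positive integers with k < q-1 and l < q-1. Let P^□_{k,l} = conv{(0,0),(k,0),(0,l),(k,l)}. Then the minimum distance of the toric code C_{P^□_{k,l}} over 𝔽_q equals (q-1)² − (k+l)(q-1) + k·l = ((q-1)−k)·((q-1)−l). -/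
open Polynomial Finset


lemma aux_count_nonzero_eval {F : Type} [Field F] [Fintype F] [DecidableEq F]
    (p : F[X]) (hp : p ≠ 0) {d : ℕ} (hd : p.natDegree ≤ d) :
    Fintype.card Fˣ - d ≤ (Finset.univ.filter fun u : Fˣ => p.eval ↑u ≠ 0).card := by
  classical
  have hZ : (Finset.univ.filter fun u : Fˣ => p.eval ↑u = 0).card ≤ d := by
    have hmaps : ∀ u ∈ Finset.univ.filter fun u : Fˣ => p.eval ↑u = 0,
        ((u : F) : F) ∈ p.roots.toFinset := by
      intro u hu
      rw [Finset.mem_filter] at hu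
      rw [Multiset.mem_toFinset, Polynomial.mem_roots hp]
      exact hu.2
    calc (Finset.univ.filter fun u : Fˣ => p.eval ↑u = 0).card
        ≤ p.roots.toFinset.card :=
          Finset.card_le_card_of_injOn (fun u : Fˣ => (u : F)) hmaps
            (fun a _ b _ h => Units.ext h)
      _ ≤ Multiset.card p.roots := p.roots.toFinset_card_le
      _ ≤ p.natDegree := p.card_roots'
      _ ≤ d := hd
  have hsplit := Finset.card_filter_add_card_filter_not
    (s := (Finset.univ : Finset Fˣ)) (p := fun u : Fˣ => p.eval ↑u = 0)
  simp only [ne_eq, Finset.card_univ] at hsplit ⊢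
  omega

lemma rect_latticePts (k l : ℕ) :
    latticePts {((0:ℤ),(0:ℤ)), ((k:ℤ),0), (0,(l:ℤ)), ((k:ℤ),(l:ℤ))} =
      {p : ℤ × ℤ | 0 ≤ p.1 ∧ p.1 ≤ (k:ℤ) ∧ 0 ≤ p.2 ∧ p.2 ≤ (l:ℤ)} := by
  have himg : toRealPt '' ((({((0:ℤ),(0:ℤ)), ((k:ℤ),0), (0,(l:ℤ)), ((k:ℤ),(l:ℤ))} :
        Finset (ℤ×ℤ))) : Set (ℤ×ℤ))
      = ({0, (k:ℝ)} : Set ℝ) ×ˢ ({0, (l:ℝ)} : Set ℝ) := by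
    ext x
    simp only [Finset.coe_insert, Finset.coe_singleton, Set.image_insert_eq,
      Set.image_singleton, toRealPt, Set.mem_insert_iff, Set.mem_singleton_iff,
      Set.mem_prod, Prod.ext_iff, Int.cast_zero, Int.cast_natCast]
    tauto
  ext p
  rw [latticePts, Set.mem_setOf_eq, himg, convexHull_prod, convexHull_pair, convexHull_pair,
    segment_eq_Icc (by positivity : (0:ℝ) ≤ (k:ℝ)),
    segment_eq_Icc (by positivity : (0:ℝ) ≤ (l:ℝ))]
  simp only [Set.mem_prod, Set.mem_Icc, toRealPt]
  constructor
  · rintro ⟨⟨h1, h2⟩, h3, h4⟩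
    exact ⟨by exact_mod_cast h1, by exact_mod_cast h2, by exact_mod_cast h3,
      by exact_mod_cast h4⟩
  · rintro ⟨h1, h2, h3, h4⟩
    exact ⟨⟨by exact_mod_cast h1, by exact_mod_cast h2⟩, by exact_mod_cast h3,
      by exact_mod_cast h4⟩

/-- the minimum distance of the toric code of the rectangle
`conv{(0,0),(k,0),(0,l),(k,l)}` over `𝔽_q` for `0 < k, l < q - 1` equals
`(q-1)² − (k+l)(q-1) + k·l = ((q-1)−k)((q-1)−l)`. -/
theorem minDist_toricCode_rectangle (q : ℕ) (hq : IsPrimePow q)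
    (F : Type) [Field F] [Fintype F] (hF : Fintype.card F = q)
    (k l : ℕ) (hk : 0 < k) (hl : 0 < l) (hkq : k < q - 1) (hlq : l < q - 1) :
    (minDist (toricCode F (latticePts
        {((0:ℤ),(0:ℤ)), ((k:ℤ),0), (0,(l:ℤ)), ((k:ℤ),(l:ℤ))})) : ℤ)
      = ((q:ℤ) - 1)^2 - ((k:ℤ) + l) * ((q:ℤ) - 1) + (k:ℤ) * l := by
  classical
  have hq2 : 2 ≤ q := hq.two_le
  have hcard : Fintype.card Fˣ = q - 1 := by rw [Fintype.card_units, hF]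
  -- the exponent set, reindexed over ℕ × ℕ
  set Tset : Set (ℕ × ℕ) := {m | m.1 ≤ k ∧ m.2 ≤ l} with hTset
  set E : ℕ × ℕ → (Fˣ × Fˣ) → F :=
    fun m => fun t => (t.1 : F) ^ m.1 * (t.2 : F) ^ m.2 with hE
  have hS : latticePts {((0:ℤ),(0:ℤ)), ((k:ℤ),0), (0,(l:ℤ)), ((k:ℤ),(l:ℤ))} =
      (fun m : ℕ × ℕ => ((m.1 : ℤ), (m.2 : ℤ))) '' Tset := by
    rw [rect_latticePts]
    ext p
    constructor
    · rintro ⟨h1, h2, h3, h4⟩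
      refine ⟨(p.1.toNat, p.2.toNat), ⟨by omega, by omega⟩, ?_⟩
      show ((p.1.toNat : ℤ), (p.2.toNat : ℤ)) = p
      have e1 : ((p.1.toNat : ℤ)) = p.1 := Int.toNat_of_nonneg h1
      have e2 : ((p.2.toNat : ℤ)) = p.2 := Int.toNat_of_nonneg h3
      rw [e1, e2]
    · rintro ⟨m, ⟨hm1, hm2⟩, rfl⟩
      refine ⟨?_, ?_, ?_, ?_⟩ <;> show _ ≤ _ <;> simp <;> omega
  have hcode : toricCode F (latticePts
        {((0:ℤ),(0:ℤ)), ((k:ℤ),0), (0,(l:ℤ)), ((k:ℤ),(l:ℤ))}) =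
      Submodule.span F (E '' Tset) := by
    rw [toricCode, hS, ← Set.image_comp]
    refine congrArg (Submodule.span F) (Set.image_congr fun m _ => ?_)
    funext t
    simp [Function.comp, evalMonomial, hE, zpow_natCast]
  set TF : Finset (ℕ × ℕ) := Finset.range (k+1) ×ˢ Finset.range (l+1) with hTF
  -- weight as a double count
  have hwt : ∀ c : (Fˣ × Fˣ) → F, hammingWt c =
      ∑ t₁ : Fˣ, (Finset.univ.filter fun t₂ : Fˣ => c (t₁, t₂) ≠ 0).card := by
    intro c
    rw [hammingWt, Set.ncard_eq_toFinset_card', Set.toFinset_setOf]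
    rw [← Finset.univ_product_univ, Finset.card_filter, Finset.sum_product]
    simp [Finset.card_filter]
  -- LOWER BOUND
  have hlow : ∀ c, c ∈ Submodule.span F (E '' Tset) → c ≠ 0 →
      (q - 1 - k) * (q - 1 - l) ≤ hammingWt c := by
    intro c hc hc0
    obtain ⟨w, hw, rfl⟩ := (Finsupp.mem_span_image_iff_linearCombination F).1 hc
    rw [Finsupp.mem_supported] at hw
    set c : (Fˣ × Fˣ) → F := Finsupp.linearCombination F E w with hcdef
    have hformula : ∀ t, c t = ∑ m ∈ TF, w m * ((t.1 : F) ^ m.1 * (t.2 : F) ^ m.2) := by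
      intro t
      rw [hcdef, Finsupp.linearCombination_apply, Finsupp.sum]
      rw [Finset.sum_apply]
      refine Finset.sum_subset ?_ ?_
      · intro m hm
        have := hw hm
        simp only [hTset, Set.mem_setOf_eq] at this
        simp [hTF, Finset.mem_product, Finset.mem_range]
        omega
      · intro m _ hm
        simp [Finsupp.notMem_support_iff.1 hm]
    set R : ℕ → Polynomial F :=
      fun b => ∑ a ∈ Finset.range (k+1), Polynomial.C (w (a, b)) * Polynomial.X ^ a with hR
    set Q : Fˣ → Polynomial F :=
      fun t₁ => ∑ b ∈ Finset.range (l+1), Polynomial.C ((R b).eval ↑t₁) * Polynomial.X ^ b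
      with hQ
    have hRdeg : ∀ b, (R b).natDegree ≤ k := by
      intro b
      refine Polynomial.natDegree_sum_le_of_forall_le _ _ fun a ha => ?_
      exact (Polynomial.natDegree_C_mul_X_pow_le _ _).trans
        (by simpa using Nat.lt_succ_iff.1 (Finset.mem_range.1 ha))
    have hQdeg : ∀ t₁, (Q t₁).natDegree ≤ l := by
      intro t₁
      refine Polynomial.natDegree_sum_le_of_forall_le _ _ fun b hb => ?_
      exact (Polynomial.natDegree_C_mul_X_pow_le _ _).trans
        (by simpa using Nat.lt_succ_iff.1 (Finset.mem_range.1 hb))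
    have hReval : ∀ b (x : F), (R b).eval x = ∑ a ∈ Finset.range (k+1), w (a, b) * x ^ a := by
      intro b x
      rw [hR]
      simp [Polynomial.eval_finset_sum]
    have hQeval : ∀ t : Fˣ × Fˣ, (Q t.1).eval ↑t.2 = c t := by
      intro t
      rw [hformula t, hTF, Finset.sum_product, Finset.sum_comm, hQ]
      rw [Polynomial.eval_finset_sum]
      refine Finset.sum_congr rfl fun b _ => ?_
      simp only [Polynomial.eval_mul, Polynomial.eval_C, Polynomial.eval_pow, Polynomial.eval_X]
      rw [hReval, Finset.sum_mul]
      exact Finset.sum_congr rfl fun a _ => by ring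
    have hQcoeff : ∀ (t₁ : Fˣ) (b : ℕ), b ≤ l → (Q t₁).coeff b = (R b).eval ↑t₁ := by
      intro t₁ b hb
      rw [hQ]
      simp only [Polynomial.finset_sum_coeff, Polynomial.coeff_C_mul, Polynomial.coeff_X_pow]
      rw [Finset.sum_eq_single b]
      · rw [if_pos rfl, mul_one]
      · intro b' _ hb'; rw [if_neg (Ne.symm hb'), mul_zero]
      · intro hbmem; exact absurd (Finset.mem_range.2 (by omega)) hbmem
    obtain ⟨s, hs⟩ : ∃ s, c s ≠ 0 := by
      by_contra hcon
      push_neg at hcon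
      exact hc0 (funext fun t => hcon t)
    have hQs : Q s.1 ≠ 0 := fun h0 => hs (by rw [← hQeval s, h0, Polynomial.eval_zero])
    obtain ⟨b₀, hb₀⟩ : ∃ b₀, (Q s.1).coeff b₀ ≠ 0 := by
      by_contra hcon
      push_neg at hcon
      exact hQs (Polynomial.ext fun n => by simp [hcon n])
    have hb₀l : b₀ ≤ l := le_trans (Polynomial.le_natDegree_of_ne_zero hb₀) (hQdeg s.1)
    have hRb₀ : (R b₀).eval ↑s.1 ≠ 0 := by rwa [← hQcoeff s.1 b₀ hb₀l]
    have hRne : R b₀ ≠ 0 := fun h0 => hRb₀ (by rw [h0, Polynomial.eval_zero])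
    have hrows : q - 1 - k ≤
        (Finset.univ.filter fun t₁ : Fˣ => (R b₀).eval ↑t₁ ≠ 0).card := by
      have := aux_count_nonzero_eval (R b₀) hRne (hRdeg b₀)
      rwa [hcard] at this
    rw [hwt c]
    calc (q - 1 - k) * (q - 1 - l)
        ≤ (Finset.univ.filter fun t₁ : Fˣ => (R b₀).eval ↑t₁ ≠ 0).card * (q - 1 - l) :=
          Nat.mul_le_mul_right _ hrows
      _ = ∑ _t₁ ∈ Finset.univ.filter fun t₁ : Fˣ => (R b₀).eval ↑t₁ ≠ 0, (q - 1 - l) := by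
          rw [Finset.sum_const, smul_eq_mul]
      _ ≤ ∑ t₁ ∈ Finset.univ.filter fun t₁ : Fˣ => (R b₀).eval ↑t₁ ≠ 0,
            (Finset.univ.filter fun t₂ : Fˣ => c (t₁, t₂) ≠ 0).card := by
          refine Finset.sum_le_sum fun t₁ ht₁ => ?_
          rw [Finset.mem_filter] at ht₁
          have hQt₁ : Q t₁ ≠ 0 := by
            intro h0
            apply ht₁.2
            rw [← hQcoeff t₁ b₀ hb₀l, h0, Polynomial.coeff_zero]
          have hcnt := aux_count_nonzero_eval (Q t₁) hQt₁ (hQdeg t₁)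
          rw [hcard] at hcnt
          have hQe : ∀ t₂ : Fˣ, (Q t₁).eval ↑t₂ = c (t₁, t₂) := fun t₂ => hQeval (t₁, t₂)
          have hfeq : (Finset.univ.filter fun u : Fˣ => (Q t₁).eval ↑u ≠ 0)
              = (Finset.univ.filter fun t₂ : Fˣ => c (t₁, t₂) ≠ 0) :=
            Finset.filter_congr fun t₂ _ => by rw [hQe t₂]
          rw [← hfeq]
          exact hcnt
      _ ≤ ∑ t₁ : Fˣ, (Finset.univ.filter fun t₂ : Fˣ => c (t₁, t₂) ≠ 0).card :=
          Finset.sum_le_sum_of_subset (Finset.filter_subset _ _)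
  -- UPPER BOUND: explicit codeword
  obtain ⟨A, -, hA⟩ := Finset.exists_subset_card_eq
    (s := (Finset.univ : Finset Fˣ)) (n := k)
    (by rw [Finset.card_univ, hcard]; omega)
  obtain ⟨B, -, hB⟩ := Finset.exists_subset_card_eq
    (s := (Finset.univ : Finset Fˣ)) (n := l)
    (by rw [Finset.card_univ, hcard]; omega)
  set g : Polynomial F := ∏ α ∈ A, (Polynomial.X - Polynomial.C (α : F)) with hg
  set h : Polynomial F := ∏ β ∈ B, (Polynomial.X - Polynomial.C (β : F)) with hh
  have hgne : g ≠ 0 := by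
    rw [hg]
    exact Finset.prod_ne_zero_iff.2 fun α _ => Polynomial.X_sub_C_ne_zero _
  have hhne : h ≠ 0 := by
    rw [hh]
    exact Finset.prod_ne_zero_iff.2 fun β _ => Polynomial.X_sub_C_ne_zero _
  have hgdeg : g.natDegree = k := by
    rw [hg, Polynomial.natDegree_prod _ _ (fun α _ => Polynomial.X_sub_C_ne_zero _)]
    simp [Polynomial.natDegree_X_sub_C, hA]
  have hhdeg : h.natDegree = l := by
    rw [hh, Polynomial.natDegree_prod _ _ (fun β _ => Polynomial.X_sub_C_ne_zero _)]
    simp [Polynomial.natDegree_X_sub_C, hB]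
  have hgroot : ∀ u : Fˣ, g.eval ↑u = 0 ↔ u ∈ A := by
    intro u
    rw [hg, Polynomial.eval_prod, Finset.prod_eq_zero_iff]
    constructor
    · rintro ⟨α, hαA, hα⟩
      simp only [Polynomial.eval_sub, Polynomial.eval_X, Polynomial.eval_C,
        sub_eq_zero] at hα
      rwa [show u = α from Units.ext hα]
    · intro hu
      exact ⟨u, hu, by simp⟩
  have hhroot : ∀ v : Fˣ, h.eval ↑v = 0 ↔ v ∈ B := by
    intro v
    rw [hh, Polynomial.eval_prod, Finset.prod_eq_zero_iff]
    constructor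
    · rintro ⟨β, hβB, hβ⟩
      simp only [Polynomial.eval_sub, Polynomial.eval_X, Polynomial.eval_C,
        sub_eq_zero] at hβ
      rwa [show v = β from Units.ext hβ]
    · intro hv
      exact ⟨v, hv, by simp⟩
  set c : (Fˣ × Fˣ) → F := fun t => g.eval ↑t.1 * h.eval ↑t.2 with hc
  have hceval : ∀ t : Fˣ × Fˣ,
      c t = ∑ m ∈ TF, (g.coeff m.1 * h.coeff m.2) * ((t.1 : F) ^ m.1 * (t.2 : F) ^ m.2) := by
    intro t
    show g.eval (↑t.1 : F) * h.eval (↑t.2 : F) = _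
    rw [Polynomial.eval_eq_sum_range' (n := k + 1) (by rw [hgdeg]; exact lt_add_one k) (↑t.1 : F),
      Polynomial.eval_eq_sum_range' (n := l + 1) (by rw [hhdeg]; exact lt_add_one l) (↑t.2 : F)]
    rw [Finset.sum_mul_sum, hTF, Finset.sum_product]
    exact Finset.sum_congr rfl fun a _ => Finset.sum_congr rfl fun b _ => by ring
  have hcmem : c ∈ Submodule.span F (E '' Tset) := by
    have hceq : c = ∑ m ∈ TF, (g.coeff m.1 * h.coeff m.2) • E m := by
      funext t
      rw [hceval t, Finset.sum_apply]
      exact Finset.sum_congr rfl fun m _ => by simp [hE]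
    rw [hceq]
    refine Submodule.sum_mem _ fun m hm => Submodule.smul_mem _ _ (Submodule.subset_span ?_)
    refine ⟨m, ?_, rfl⟩
    simp only [hTF, Finset.mem_product, Finset.mem_range] at hm
    simp only [hTset, Set.mem_setOf_eq]
    omega
  have hc0 : c ≠ 0 := by
    have hAne : (Aᶜ : Finset Fˣ).Nonempty := by
      rw [← Finset.card_pos, Finset.card_compl, hcard, hA]; omega
    have hBne : (Bᶜ : Finset Fˣ).Nonempty := by
      rw [← Finset.card_pos, Finset.card_compl, hcard, hB]; omega
    obtain ⟨u, hu⟩ := hAne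
    obtain ⟨v, hv⟩ := hBne
    rw [Finset.mem_compl] at hu hv
    intro h0
    have := congrFun h0 (u, v)
    rw [hc] at this
    simp only [Pi.zero_apply, mul_eq_zero] at this
    rcases this with h1 | h1
    · exact hu ((hgroot u).1 h1)
    · exact hv ((hhroot v).1 h1)
  have hcwt : hammingWt c = (q - 1 - k) * (q - 1 - l) := by
    rw [hammingWt, Set.ncard_eq_toFinset_card', Set.toFinset_setOf]
    have hsplit : (Finset.univ.filter fun t : Fˣ × Fˣ => c t ≠ 0) =
        (Finset.univ.filter fun u : Fˣ => g.eval ↑u ≠ 0) ×ˢ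
        (Finset.univ.filter fun v : Fˣ => h.eval ↑v ≠ 0) := by
      ext t
      simp only [Finset.mem_filter, Finset.mem_product, Finset.mem_univ, true_and, hc,
        mul_ne_zero_iff]
    rw [hsplit, Finset.card_product]
    have h1 : (Finset.univ.filter fun u : Fˣ => g.eval ↑u ≠ 0) = Aᶜ := by
      ext u; simp [hgroot u]
    have h2 : (Finset.univ.filter fun v : Fˣ => h.eval ↑v ≠ 0) = Bᶜ := by
      ext v; simp [hhroot v]
    rw [h1, h2, Finset.card_compl, Finset.card_compl, hcard, hA, hB]
  -- CONCLUSION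
  have hmain : minDist (toricCode F (latticePts
      {((0:ℤ),(0:ℤ)), ((k:ℤ),0), (0,(l:ℤ)), ((k:ℤ),(l:ℤ))})) = (q - 1 - k) * (q - 1 - l) := by
    rw [minDist, hcode]
    have hNmem : (q - 1 - k) * (q - 1 - l) ∈
        {w | ∃ c ∈ Submodule.span F (E '' Tset), c ≠ 0 ∧ hammingWt c = w} :=
      ⟨c, hcmem, hc0, hcwt⟩
    refine le_antisymm (Nat.sInf_le hNmem) (le_csInf ⟨_, hNmem⟩ ?_)
    rintro w ⟨c', hc', hc'0, rfl⟩
    exact hlow c' hc' hc'0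
  rw [hmain]
  have e1 : ((q - 1 - k) * (q - 1 - l) : ℕ) = (q - 1 - k : ℕ) * (q - 1 - l : ℕ) := rfl
  push_cast [Nat.cast_sub (by omega : k ≤ q - 1), Nat.cast_sub (by omega : l ≤ q - 1),
    Nat.cast_sub (by omega : 1 ≤ q)]
  ring
end

section
/- Let q be a prime power and k, l positive integers with k ≤ q-2 and l ≤ q-2, and set m = max{k,l}. Let P^△_{k,l} = conv{(0,0),(k,0),(0,l)}. Then the minimum distance of the toric code C_{P^△_{k,l}} over 𝔽_q equals (q-1)² − m(q-1). -/
/-!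
Every point of the triangle satisfies `i + j ≤ m`, so every codeword is the evaluation on the
torus `(𝔽_q^*)²` of a polynomial of total degree at most `m`; by Schwartz–Zippel on the grid
`𝔽_q^* × 𝔽_q^*`, a nonzero one vanishes at no more than `m (q - 1)` of its `(q - 1)²` points.
Conversely, the longer leg of the triangle carries the monomials of `∏_{a ∈ T} (x - a)` for an
`m`-element set `T ⊆ 𝔽_q^*`, whose evaluation vanishes at exactly `m (q - 1)` points.
-/

open MvPolynomial Finset

lemma toRealPt_nsmul (n : ℕ) (v : ℤ × ℤ) : toRealPt (n • v) = (n : ℝ) • toRealPt v := by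
  simp [toRealPt]

lemma nsmul_mem_latticePts {V : Finset (ℤ × ℤ)} {v : ℤ × ℤ} {N n : ℕ} (h0 : 0 ∈ V)
    (hN : N • v ∈ V) (hn : n ≤ N) : n • v ∈ latticePts V := by
  have hcoef : (n : ℝ) = (n / N : ℝ) * N := by
    rcases Nat.eq_zero_or_pos N with rfl | hN
    · simp [Nat.le_zero.1 hn]
    · field_simp
  set hull := convexHull ℝ (toRealPt '' (V : Set (ℤ × ℤ)))
  have hzero : (0 : ℝ × ℝ) ∈ hull := subset_convexHull ℝ _ ⟨0, h0, by simp [toRealPt]⟩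
  have hvertex : toRealPt (N • v) ∈ hull := subset_convexHull ℝ _ ⟨_, hN, rfl⟩
  change toRealPt (n • v) ∈ hull
  rw [toRealPt_nsmul, hcoef, mul_smul, ← toRealPt_nsmul]
  exact (convex_convexHull ℝ _).smul_mem_of_zero_mem hzero hvertex
    ⟨by positivity, div_le_one_of_le₀ (by exact_mod_cast hn) (by positivity)⟩

lemma latticePts_triangle_subset (k l : ℕ) :
    ∀ p ∈ latticePts {((0:ℤ),(0:ℤ)), ((k:ℤ),0), (0,(l:ℤ))},
      ∃ i j : ℕ, i + j ≤ max k l ∧ p = ((i : ℤ), (j : ℤ)) := by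
  intro p hp
  set H : Set (ℝ × ℝ) := {x | 0 ≤ x.1 ∧ 0 ≤ x.2 ∧ x.1 + x.2 ≤ (max k l : ℕ)}
  have hH : Convex ℝ H := by
    rintro x ⟨hx1, hx2, hx⟩ y ⟨hy1, hy2, hy⟩ a b ha hb hab
    refine ⟨by simp only [Prod.fst_add, Prod.smul_fst, smul_eq_mul]; positivity,
      by simp only [Prod.snd_add, Prod.smul_snd, smul_eq_mul]; positivity, ?_⟩
    simp only [Prod.fst_add, Prod.snd_add, Prod.smul_fst, Prod.smul_snd, smul_eq_mul]
    nlinarith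
  have hV : toRealPt '' ↑({((0:ℤ),(0:ℤ)), ((k:ℤ),0), (0,(l:ℤ))} : Finset (ℤ × ℤ)) ⊆ H := by
    simp [H, toRealPt, Set.insert_subset_iff]
  obtain ⟨h1, h2, h3⟩ := convexHull_min hV hH hp
  simp only [toRealPt] at h1 h2 h3
  have h1 : 0 ≤ p.1 := by exact_mod_cast h1
  have h2 : 0 ≤ p.2 := by exact_mod_cast h2
  have h3 : p.1 + p.2 ≤ (max k l : ℕ) := by exact_mod_cast h3
  exact ⟨p.1.toNat, p.2.toNat, by omega, by ext <;> simp <;> omega⟩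

lemma minDist_eq_of_forall_le {F X : Type*} [Field F] {C : Submodule F (X → F)} {N : ℕ}
    (hN : ∃ c ∈ C, c ≠ 0 ∧ hammingWt c = N) (hle : ∀ c ∈ C, c ≠ 0 → N ≤ hammingWt c) :
    minDist C = N :=
  le_antisymm (Nat.sInf_le hN) <| le_csInf ⟨N, hN⟩ <| by
    rintro _ ⟨c, hc, hc0, rfl⟩
    exact hle c hc hc0

lemma hammingWt_comp_fst {X Y F : Type*} [Zero F] (g : X → F) :
    hammingWt (fun x : X × Y => g x.1) = hammingWt g * Nat.card Y := by
  rw [hammingWt, hammingWt, ← Set.ncard_univ, ← Set.ncard_prod]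
  congr 1
  ext; simp

lemma hammingWt_comp_snd {X Y F : Type*} [Zero F] (g : Y → F) :
    hammingWt (fun x : X × Y => g x.2) = Nat.card X * hammingWt g := by
  rw [hammingWt, hammingWt, ← Set.ncard_univ, ← Set.ncard_prod]
  congr 1
  ext; simp

section ToricCode

variable {F : Type*} [Field F]

lemma evalMonomial_nsmul (n : ℕ) (v : ℤ × ℤ) (t : Fˣ × Fˣ) :
    evalMonomial (n • v) t = evalMonomial v t ^ n := by
  simp [evalMonomial, mul_pow, zpow_mul, mul_comm]

lemma eval_comp_evalMonomial_mem_toricCode {S : Set (ℤ × ℤ)} {v : ℤ × ℤ} (f : Polynomial F)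
    (hS : ∀ n ≤ f.natDegree, n • v ∈ S) :
    (fun t => f.eval (evalMonomial v t)) ∈ toricCode F S := by
  have hsum : (fun t => f.eval (evalMonomial v t)) =
      ∑ n ∈ range (f.natDegree + 1), f.coeff n • evalMonomial (n • v) := by
    ext t
    simp only [Polynomial.eval_eq_sum_range, Finset.sum_apply, Pi.smul_apply, smul_eq_mul,
      evalMonomial_nsmul]
  rw [hsum]
  refine Submodule.sum_mem _ fun n hn => Submodule.smul_mem _ _ (Submodule.subset_span ?_)
  exact ⟨n • v, hS n (Nat.lt_succ_iff.1 (mem_range.1 hn)), rfl⟩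

lemma exists_natDegree_eq_hammingWt_eval_eq [Finite F] {m : ℕ} (hm : m ≤ Nat.card Fˣ) :
    ∃ f : Polynomial F, f.natDegree = m ∧
      hammingWt (fun s : Fˣ => f.eval (s : F)) = Nat.card Fˣ - m := by
  classical
  have := Fintype.ofFinite F
  obtain ⟨T, -, hT⟩ := exists_subset_card_eq (s := (univ : Finset Fˣ)) (n := m)
    (by rwa [card_univ, ← Nat.card_eq_fintype_card])
  refine ⟨∏ a ∈ T, (Polynomial.X - Polynomial.C (a : F)), ?_, ?_⟩
  · rw [Polynomial.natDegree_finsetProd_X_sub_C_eq_card, hT]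
  · have hzero : {s : Fˣ | (∏ a ∈ T, (Polynomial.X - Polynomial.C (a : F))).eval (s : F) ≠ 0}
        = ↑Tᶜ := by
      ext s
      simp [Polynomial.eval_prod, prod_eq_zero_iff, sub_eq_zero, Units.val_inj]
    rw [hammingWt, hzero, Set.ncard_coe_finset, card_compl, hT, Nat.card_eq_fintype_card]

lemma exists_mem_toricCode_hammingWt_eq [Finite F] {S : Set (ℤ × ℤ)} {v : ℤ × ℤ}
    (hv : v = (1, 0) ∨ v = (0, 1)) {m : ℕ} (hm : m < Nat.card Fˣ) (hS : ∀ n ≤ m, n • v ∈ S) :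
    ∃ c ∈ toricCode F S, c ≠ 0 ∧ hammingWt c = (Nat.card Fˣ - m) * Nat.card Fˣ := by
  obtain ⟨f, hdeg, hwt⟩ := exists_natDegree_eq_hammingWt_eval_eq hm.le
  have hc : hammingWt (fun t => f.eval (evalMonomial v t)) =
      (Nat.card Fˣ - m) * Nat.card Fˣ := by
    rcases hv with rfl | rfl
    · simpa [evalMonomial, hwt] using hammingWt_comp_fst (Y := Fˣ) (fun s : Fˣ => f.eval (s : F))
    · simpa [evalMonomial, hwt, mul_comm] using
        hammingWt_comp_snd (X := Fˣ) (fun s : Fˣ => f.eval (s : F))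
  refine ⟨_, eval_comp_evalMonomial_mem_toricCode f (hdeg ▸ hS), ?_, hc⟩
  rintro h
  have hpos : 0 < (Nat.card Fˣ - m) * Nat.card Fˣ := Nat.mul_pos (by omega) (by omega)
  rw [← hc, h] at hpos
  simp [hammingWt] at hpos

variable (F) in
noncomputable def torusEval : MvPolynomial (Fin 2) F →ₗ[F] (Fˣ × Fˣ → F) :=
  LinearMap.pi fun t => (aeval ![(t.1 : F), t.2]).toLinearMap

lemma torusEval_apply (p : MvPolynomial (Fin 2) F) (t : Fˣ × Fˣ) :
    torusEval F p t = eval ![(t.1 : F), t.2] p := by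
  simp [torusEval]

lemma evalMonomial_eq_torusEval (i j : ℕ) :
    evalMonomial ((i : ℤ), (j : ℤ)) = torusEval F (X 0 ^ i * X 1 ^ j) := by
  ext t
  simp [torusEval_apply, evalMonomial]

lemma toricCode_le_map_restrictTotalDegree {S : Set (ℤ × ℤ)} {m : ℕ}
    (hS : ∀ p ∈ S, ∃ i j : ℕ, i + j ≤ m ∧ p = ((i : ℤ), (j : ℤ))) :
    toricCode F S ≤ (restrictTotalDegree (Fin 2) F m).map (torusEval F) := by
  refine Submodule.span_le.2 ?_
  rintro _ ⟨p, hp, rfl⟩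
  obtain ⟨i, j, hij, rfl⟩ := hS p hp
  refine ⟨X 0 ^ i * X 1 ^ j, ?_, (evalMonomial_eq_torusEval i j).symm⟩
  rw [SetLike.mem_coe, mem_restrictTotalDegree]
  refine (totalDegree_mul _ _).trans ?_
  simpa [totalDegree_X_pow] using hij

lemma card_sub_totalDegree_mul_card_le_hammingWt_torusEval [Finite F]
    {p : MvPolynomial (Fin 2) F} (hp : p ≠ 0) :
    (Nat.card Fˣ - p.totalDegree) * Nat.card Fˣ ≤ hammingWt (torusEval F p) := by
  classical
  have := Fintype.ofFinite F
  set U : Finset F := univ.map ⟨Units.val, Units.val_injective⟩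
  set Q := Nat.card Fˣ
  have hU : #U = Q := by simp [U, Q, Nat.card_eq_fintype_card]
  have hQ : 0 < Q := Nat.card_pos
  set box := Fintype.piFinset fun _ : Fin 2 => U
  have hzeros : #{f ∈ box | eval f p = 0} ≤ p.totalDegree * Q := by
    have := schwartz_zippel_totalDegree hp U
    rw [hU, div_le_div_iff₀ (by positivity) (by positivity)] at this
    have h : (#{f ∈ box | eval f p = 0} : ℚ≥0) * Q ≤ (p.totalDegree * Q) * Q := by
      convert this using 1; ring
    exact_mod_cast le_of_mul_le_mul_right h (by exact_mod_cast hQ)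
  have hsplit := card_filter_add_card_filter_not (s := box) (fun f => eval f p = 0)
  have hbox : #box = Q * Q := by simp [box, hU, sq]
  have hwt : hammingWt (torusEval F p) = #{f ∈ box | ¬ eval f p = 0} := by
    rw [hammingWt, Set.ncard_eq_toFinset_card']
    refine card_bij (fun t _ => ![(t.1 : F), t.2]) ?_ ?_ ?_
    · intro t ht
      simpa [box, U, torusEval_apply] using ht
    · intro t _ t' _ h
      have h0 := congrFun h 0
      have h1 := congrFun h 1
      simp only [Matrix.cons_val_zero, Matrix.cons_val_one] at h0 h1
      exact Prod.ext (Units.ext h0) (Units.ext h1)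
    · intro f hf
      simp only [box, U, mem_filter, Fintype.mem_piFinset, mem_map, mem_univ, true_and,
        Function.Embedding.coeFn_mk] at hf
      obtain ⟨⟨u, hu⟩, ⟨w, hw⟩⟩ := And.intro (hf.1 0) (hf.1 1)
      have hf' : f = ![(u : F), w] := by
        ext i; fin_cases i <;> simp [hu, hw]
      subst hf'
      exact ⟨(u, w), by simpa [torusEval_apply] using hf.2, rfl⟩
  rw [hwt, Nat.sub_mul]
  omega

lemma card_sub_mul_card_le_hammingWt_of_mem_toricCode [Finite F] {S : Set (ℤ × ℤ)} {m : ℕ}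
    (hS : ∀ p ∈ S, ∃ i j : ℕ, i + j ≤ m ∧ p = ((i : ℤ), (j : ℤ)))
    {c : Fˣ × Fˣ → F} (hc : c ∈ toricCode F S) (hc0 : c ≠ 0) :
    (Nat.card Fˣ - m) * Nat.card Fˣ ≤ hammingWt c := by
  obtain ⟨p, hp, rfl⟩ := toricCode_le_map_restrictTotalDegree hS hc
  have hp0 : p ≠ 0 := by rintro rfl; exact hc0 (map_zero _)
  rw [SetLike.mem_coe, mem_restrictTotalDegree] at hp
  calc _ ≤ (Nat.card Fˣ - p.totalDegree) * Nat.card Fˣ := by gcongr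
    _ ≤ _ := card_sub_totalDegree_mul_card_le_hammingWt_torusEval hp0

end ToricCode

theorem minDist_toricCode_triangle_general (q : ℕ)
    (F : Type) [Field F] [Fintype F] (hF : Fintype.card F = q)
    (k l : ℕ) (hkq : k ≤ q - 2) (hlq : l ≤ q - 2) :
    (minDist (toricCode F (latticePts {((0:ℤ),(0:ℤ)), ((k:ℤ),0), (0,(l:ℤ))})) : ℤ)
      = ((q:ℤ) - 1)^2 - (max k l : ℤ) * ((q:ℤ) - 1) := by
  classical
  have hq : 2 ≤ q := hF ▸ Fintype.one_lt_card
  have hQ : Nat.card Fˣ = q - 1 := by rw [Nat.card_eq_fintype_card, Fintype.card_units, hF]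
  have hm : max k l < Nat.card Fˣ := by omega
  have hcodeword : ∃ c ∈ toricCode F (latticePts {((0:ℤ),(0:ℤ)), ((k:ℤ),0), (0,(l:ℤ))}),
      c ≠ 0 ∧ hammingWt c = (Nat.card Fˣ - max k l) * Nat.card Fˣ := by
    rcases le_total k l with h | h
    · rw [max_eq_right h] at hm ⊢
      exact exists_mem_toricCode_hammingWt_eq (Or.inr rfl) hm fun n hn =>
        nsmul_mem_latticePts (N := l) (mem_insert_self _ _) (by simp) hn
    · rw [max_eq_left h] at hm ⊢
      exact exists_mem_toricCode_hammingWt_eq (Or.inl rfl) hm fun n hn =>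
        nsmul_mem_latticePts (N := k) (mem_insert_self _ _) (by simp) hn
  rw [minDist_eq_of_forall_le hcodeword fun c hc hc0 =>
    card_sub_mul_card_le_hammingWt_of_mem_toricCode (latticePts_triangle_subset k l) hc hc0, hQ]
  rw [hQ] at hm
  push_cast [Nat.cast_sub hm.le, Nat.cast_sub (by omega : 1 ≤ q)]
  ring

/-- the minimum distance of the toric code of the triangle
`conv{(0,0),(k,0),(0,l)}` over `𝔽_q` for positive `k, l ≤ q - 2` equals
`(q-1)² − m(q-1)` where `m = max{k,l}`. -/
theorem minDist_toricCode_triangle (q : ℕ) (hq : IsPrimePow q)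
    (F : Type) [Field F] [Fintype F] (hF : Fintype.card F = q)
    (k l : ℕ) (hk : 0 < k) (hl : 0 < l) (hkq : k ≤ q - 2) (hlq : l ≤ q - 2) :
    (minDist (toricCode F (latticePts {((0:ℤ),(0:ℤ)), ((k:ℤ),0), (0,(l:ℤ))})) : ℤ)
      = ((q:ℤ) - 1)^2 - (max k l : ℤ) * ((q:ℤ) - 1) :=
  minDist_toricCode_triangle_general q F hF k l hkq hlq
end

section
/- Over the field 𝔽_7, the toric codes C_{P_6^(5)} and C_{P_6^(6)} are monomially equivalent, although the polygons P_6^(5) and P_6^(6) are not lattice equivalent. (Hence two monomially equivalent toric codes can arise from lattice non-equivalent polygons.) -/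
instance : Fact (Nat.Prime 7) := ⟨by norm_num⟩


/-! ### Auxiliary material -/

def S5' : Set (ℤ × ℤ) := {(-1,-1),(0,0),(1,0),(2,0),(3,0),(0,1)}
def S6' : Set (ℤ × ℤ) := {(1,0),(3,3),(2,2),(1,1),(0,0),(0,1)}

lemma himg5 : toRealPt '' ((P6 5 : Finset (ℤ×ℤ)) : Set (ℤ × ℤ)) =
    ({((-1:ℝ),(-1:ℝ)), ((3:ℝ),(0:ℝ)), ((0:ℝ),(1:ℝ))} : Set (ℝ×ℝ)) := by
  show toRealPt '' (({((-1:ℤ),(-1:ℤ)),(3,0),(0,1)} : Finset (ℤ×ℤ)) : Set (ℤ×ℤ)) = _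
  simp [Set.image_insert_eq, toRealPt]

lemma himg6 : toRealPt '' ((P6 6 : Finset (ℤ×ℤ)) : Set (ℤ × ℤ)) =
    ({((0:ℝ),(0:ℝ)), ((1:ℝ),(0:ℝ)), ((3:ℝ),(3:ℝ)), ((0:ℝ),(1:ℝ))} : Set (ℝ×ℝ)) := by
  show toRealPt '' (({((0:ℤ),(0:ℤ)),(1,0),(3,3),(0,1)} : Finset (ℤ×ℤ)) : Set (ℤ×ℤ)) = _
  simp [Set.image_insert_eq, toRealPt]

lemma hull_le_halfspace (s : Set (ℝ×ℝ)) (α β γ : ℝ) (h : ∀ z ∈ s, α*z.1 + β*z.2 ≤ γ) :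
    convexHull ℝ s ⊆ {z : ℝ×ℝ | α*z.1 + β*z.2 ≤ γ} :=
  convexHull_min h (convex_halfSpace_le
    ⟨fun x y => by simp [Prod.fst_add, Prod.snd_add]; ring,
     fun c x => by simp [Prod.smul_fst, Prod.smul_snd, smul_eq_mul]; ring⟩ γ)

lemma mem_hull3 {a b c x : ℝ × ℝ} (w₁ w₂ w₃ : ℝ) (h₁ : 0 ≤ w₁) (h₂ : 0 ≤ w₂) (h₃ : 0 ≤ w₃)
    (hs : w₁ + w₂ + w₃ = 1) (hx : w₁ • a + w₂ • b + w₃ • c = x) :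
    x ∈ convexHull ℝ ({a, b, c} : Set (ℝ × ℝ)) := by
  have := (convex_convexHull ℝ ({a,b,c}:Set (ℝ×ℝ))).sum_mem (t := Finset.univ)
    (w := ![w₁,w₂,w₃]) (z := ![a,b,c]) ?_ ?_ ?_
  · simpa [Fin.sum_univ_three, hx] using this
  · intro i _; fin_cases i <;> assumption
  · simp [Fin.sum_univ_three, hs]
  · intro i _; fin_cases i <;> apply subset_convexHull <;> simp

lemma mem_hull4 {a b c d x : ℝ × ℝ} (w₁ w₂ w₃ w₄ : ℝ) (h₁ : 0 ≤ w₁) (h₂ : 0 ≤ w₂)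
    (h₃ : 0 ≤ w₃) (h₄ : 0 ≤ w₄) (hs : w₁ + w₂ + w₃ + w₄ = 1)
    (hx : w₁ • a + w₂ • b + w₃ • c + w₄ • d = x) :
    x ∈ convexHull ℝ ({a, b, c, d} : Set (ℝ × ℝ)) := by
  have := (convex_convexHull ℝ ({a,b,c,d}:Set (ℝ×ℝ))).sum_mem (t := Finset.univ)
    (w := ![w₁,w₂,w₃,w₄]) (z := ![a,b,c,d]) ?_ ?_ ?_
  · simpa [Fin.sum_univ_four, hx] using this
  · intro i _; fin_cases i <;> assumption
  · simp [Fin.sum_univ_four, hs]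
  · intro i _; fin_cases i <;> apply subset_convexHull <;> simp

lemma latt5 : latticePts (P6 5) = S5' := by
  ext p
  simp only [latticePts, Set.mem_setOf_eq, himg5]
  constructor
  · intro hp
    have key : ∀ α β γ : ℝ, α*(-1) + β*(-1) ≤ γ → α*3 + β*0 ≤ γ → α*0 + β*1 ≤ γ →
        α*(p.1:ℝ) + β*(p.2:ℝ) ≤ γ := by
      intro α β γ h1 h2 h3
      have := hull_le_halfspace _ α β γ ?_ hp
      · exact this
      · rintro z hz
        simp only [Set.mem_insert_iff, Set.mem_singleton_iff] at hz
        rcases hz with rfl|rfl|rfl <;> (norm_num; linarith)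
    have e1 := key 1 (-4) 3 (by norm_num) (by norm_num) (by norm_num)
    have e2 := key 1 3 3 (by norm_num) (by norm_num) (by norm_num)
    have e3 := key (-2) 1 1 (by norm_num) (by norm_num) (by norm_num)
    have i1 : (p.1 : ℤ) - 4*p.2 ≤ 3 := by
      have : ((p.1 - 4*p.2 : ℤ):ℝ) ≤ ((3:ℤ):ℝ) := by push_cast; linarith
      exact_mod_cast this
    have i2 : (p.1 : ℤ) + 3*p.2 ≤ 3 := by
      have : ((p.1 + 3*p.2 : ℤ):ℝ) ≤ ((3:ℤ):ℝ) := by push_cast; linarith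
      exact_mod_cast this
    have i3 : -2*p.1 + p.2 ≤ 1 := by
      have : ((-2*p.1 + p.2 : ℤ):ℝ) ≤ ((1:ℤ):ℝ) := by push_cast; linarith
      exact_mod_cast this
    simp only [S5', Set.mem_insert_iff, Set.mem_singleton_iff, Prod.ext_iff]
    omega
  · intro hp
    simp only [S5', Set.mem_insert_iff, Set.mem_singleton_iff] at hp
    rcases hp with rfl|rfl|rfl|rfl|rfl|rfl
    · exact mem_hull3 1 0 0 (by norm_num) le_rfl le_rfl (by norm_num)
        (by norm_num [toRealPt, Prod.ext_iff, Prod.smul_mk])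
    · exact mem_hull3 (3/7) (1/7) (3/7) (by norm_num) (by norm_num) (by norm_num)
        (by norm_num) (by norm_num [toRealPt, Prod.ext_iff, Prod.smul_mk])
    · exact mem_hull3 (2/7) (3/7) (2/7) (by norm_num) (by norm_num) (by norm_num)
        (by norm_num) (by norm_num [toRealPt, Prod.ext_iff, Prod.smul_mk])
    · exact mem_hull3 (1/7) (5/7) (1/7) (by norm_num) (by norm_num) (by norm_num)
        (by norm_num) (by norm_num [toRealPt, Prod.ext_iff, Prod.smul_mk])
    · exact mem_hull3 0 1 0 le_rfl (by norm_num) le_rfl (by norm_num)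
        (by norm_num [toRealPt, Prod.ext_iff, Prod.smul_mk])
    · exact mem_hull3 0 0 1 le_rfl le_rfl (by norm_num) (by norm_num)
        (by norm_num [toRealPt, Prod.ext_iff, Prod.smul_mk])

lemma latt6 : latticePts (P6 6) = S6' := by
  ext p
  simp only [latticePts, Set.mem_setOf_eq, himg6]
  constructor
  · intro hp
    have key : ∀ α β γ : ℝ, α*0 + β*0 ≤ γ → α*1 + β*0 ≤ γ → α*3 + β*3 ≤ γ →
        α*0 + β*1 ≤ γ → α*(p.1:ℝ) + β*(p.2:ℝ) ≤ γ := by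
      intro α β γ h1 h2 h3 h4
      have := hull_le_halfspace _ α β γ ?_ hp
      · exact this
      · rintro z hz
        simp only [Set.mem_insert_iff, Set.mem_singleton_iff] at hz
        rcases hz with rfl|rfl|rfl|rfl <;> (norm_num; linarith)
    have e1 := key (-1) 0 0 (by norm_num) (by norm_num) (by norm_num) (by norm_num)
    have e2 := key 0 (-1) 0 (by norm_num) (by norm_num) (by norm_num) (by norm_num)
    have e3 := key 3 (-2) 3 (by norm_num) (by norm_num) (by norm_num) (by norm_num)
    have e4 := key (-2) 3 3 (by norm_num) (by norm_num) (by norm_num) (by norm_num)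
    have i1 : -(p.1:ℤ) ≤ 0 := by
      have : ((-p.1 : ℤ):ℝ) ≤ ((0:ℤ):ℝ) := by push_cast; linarith
      exact_mod_cast this
    have i2 : -(p.2:ℤ) ≤ 0 := by
      have : ((-p.2 : ℤ):ℝ) ≤ ((0:ℤ):ℝ) := by push_cast; linarith
      exact_mod_cast this
    have i3 : 3*p.1 - 2*p.2 ≤ 3 := by
      have : ((3*p.1 - 2*p.2 : ℤ):ℝ) ≤ ((3:ℤ):ℝ) := by push_cast; linarith
      exact_mod_cast this
    have i4 : -2*p.1 + 3*p.2 ≤ 3 := by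
      have : ((-2*p.1 + 3*p.2 : ℤ):ℝ) ≤ ((3:ℤ):ℝ) := by push_cast; linarith
      exact_mod_cast this
    simp only [S6', Set.mem_insert_iff, Set.mem_singleton_iff, Prod.ext_iff]
    omega
  · intro hp
    simp only [S6', Set.mem_insert_iff, Set.mem_singleton_iff] at hp
    rcases hp with rfl|rfl|rfl|rfl|rfl|rfl
    · exact mem_hull4 0 1 0 0 le_rfl (by norm_num) le_rfl le_rfl (by norm_num)
        (by norm_num [toRealPt, Prod.ext_iff, Prod.smul_mk])
    · exact mem_hull4 0 0 1 0 le_rfl le_rfl (by norm_num) le_rfl (by norm_num)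
        (by norm_num [toRealPt, Prod.ext_iff, Prod.smul_mk])
    · exact mem_hull4 (1/3) 0 (2/3) 0 (by norm_num) le_rfl (by norm_num) le_rfl (by norm_num)
        (by norm_num [toRealPt, Prod.ext_iff, Prod.smul_mk])
    · exact mem_hull4 0 (2/5) (1/5) (2/5) le_rfl (by norm_num) (by norm_num) (by norm_num)
        (by norm_num) (by norm_num [toRealPt, Prod.ext_iff, Prod.smul_mk])
    · exact mem_hull4 1 0 0 0 (by norm_num) le_rfl le_rfl le_rfl (by norm_num)
        (by norm_num [toRealPt, Prod.ext_iff, Prod.smul_mk])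
    · exact mem_hull4 0 0 0 1 le_rfl le_rfl le_rfl (by norm_num) (by norm_num)
        (by norm_num [toRealPt, Prod.ext_iff, Prod.smul_mk])

set_option maxHeartbeats 1000000 in
lemma apKey (M : Matrix (Fin 2) (Fin 2) ℤ) (v : ℤ × ℤ)
    (m1 : affMap M v (-1,-1) ∈ S6') (m2 : affMap M v (0,0) ∈ S6')
    (m3 : affMap M v (1,0) ∈ S6') (m4 : affMap M v (2,0) ∈ S6')
    (m5 : affMap M v (3,0) ∈ S6') (m6 : affMap M v (0,1) ∈ S6')
    (n1 : M 0 0 ≠ 0 ∨ M 1 0 ≠ 0)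
    (n2 : M 0 1 ≠ 0 ∨ M 1 1 ≠ 0)
    (n3 : M 0 1 ≠ M 0 0 ∨ M 1 1 ≠ M 1 0)
    (n4 : M 0 1 ≠ 2 * M 0 0 ∨ M 1 1 ≠ 2 * M 1 0)
    (n5 : M 0 1 ≠ 3 * M 0 0 ∨ M 1 1 ≠ 3 * M 1 0) : False := by
  simp only [affMap, S6', Set.mem_insert_iff, Set.mem_singleton_iff, Prod.ext_iff, mul_zero, mul_one, mul_neg_one, add_zero, zero_add] at m1 m2 m3 m4 m5 m6
  generalize hA : M 0 0 = a at *
  generalize hB : M 0 1 = b at *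
  generalize hC : M 1 0 = c at *
  generalize hD : M 1 1 = d at *
  generalize hV1 : v.1 = v1 at *
  generalize hV2 : v.2 = v2 at *
  clear hA hB hC hD hV1 hV2 M v
  have step1 : (v1=0 ∧ v2=0 ∧ a=1 ∧ c=1) ∨ (v1=3 ∧ v2=3 ∧ a=-1 ∧ c=-1) := by
    clear m6 m1 n2 n3 n4 n5
    rcases m2 with (⟨e1,e2⟩|⟨e1,e2⟩|⟨e1,e2⟩|⟨e1,e2⟩|⟨e1,e2⟩|⟨e1,e2⟩) <;> subst e1 <;> subst e2 <;>
      rcases m3 with (⟨f1,f2⟩|⟨f1,f2⟩|⟨f1,f2⟩|⟨f1,f2⟩|⟨f1,f2⟩|⟨f1,f2⟩) <;> omega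
  clear m2 m3 m4 m5 n1
  rcases step1 with (⟨e1,e2,e3,e4⟩|⟨e1,e2,e3,e4⟩) <;>
    subst e1 <;> subst e2 <;> subst e3 <;> subst e4 <;> omega

abbrev Tor := (ZMod 7)ˣ × (ZMod 7)ˣ

def tPerm : Equiv.Perm Tor where
  toFun x := (x.1^5*x.2^5, x.1^3*x.2^4)
  invFun x := (x.1^2*x.2^5, x.1^3*x.2)
  left_inv := by decide
  right_inv := by decide

def tD : Tor → (ZMod 7)ˣ := fun x => x.1^3*x.2^3

def Lmap : (Tor → ZMod 7) →ₗ[ZMod 7] (Tor → ZMod 7) where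
  toFun c := fun x => (tD x : ZMod 7) * c (tPerm x)
  map_add' a b := by funext x; simp [mul_add]
  map_smul' r a := by funext x; simp [smul_eq_mul]; ring

lemma hL1 : Lmap (evalMonomial ((-1:ℤ),(-1:ℤ))) = evalMonomial ((1:ℤ),(0:ℤ)) := by
  have : ∀ x : Tor, (tD x : ZMod 7) * evalMonomial ((-1:ℤ),(-1:ℤ)) (tPerm x)
      = evalMonomial ((1:ℤ),(0:ℤ)) x := by decide
  funext x; exact this x

lemma hL2 : Lmap (evalMonomial ((0:ℤ),(0:ℤ))) = evalMonomial ((3:ℤ),(3:ℤ)) := by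
  have : ∀ x : Tor, (tD x : ZMod 7) * evalMonomial ((0:ℤ),(0:ℤ)) (tPerm x)
      = evalMonomial ((3:ℤ),(3:ℤ)) x := by decide
  funext x; exact this x

lemma hL3 : Lmap (evalMonomial ((1:ℤ),(0:ℤ))) = evalMonomial ((2:ℤ),(2:ℤ)) := by
  have : ∀ x : Tor, (tD x : ZMod 7) * evalMonomial ((1:ℤ),(0:ℤ)) (tPerm x)
      = evalMonomial ((2:ℤ),(2:ℤ)) x := by decide
  funext x; exact this x

lemma hL4 : Lmap (evalMonomial ((2:ℤ),(0:ℤ))) = evalMonomial ((1:ℤ),(1:ℤ)) := by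
  have : ∀ x : Tor, (tD x : ZMod 7) * evalMonomial ((2:ℤ),(0:ℤ)) (tPerm x)
      = evalMonomial ((1:ℤ),(1:ℤ)) x := by decide
  funext x; exact this x

lemma hL5 : Lmap (evalMonomial ((3:ℤ),(0:ℤ))) = evalMonomial ((0:ℤ),(0:ℤ)) := by
  have : ∀ x : Tor, (tD x : ZMod 7) * evalMonomial ((3:ℤ),(0:ℤ)) (tPerm x)
      = evalMonomial ((0:ℤ),(0:ℤ)) x := by decide
  funext x; exact this x

lemma hL6 : Lmap (evalMonomial ((0:ℤ),(1:ℤ))) = evalMonomial ((0:ℤ),(1:ℤ)) := by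
  have : ∀ x : Tor, (tD x : ZMod 7) * evalMonomial ((0:ℤ),(1:ℤ)) (tPerm x)
      = evalMonomial ((0:ℤ),(1:ℤ)) x := by decide
  funext x; exact this x

lemma part1 : MonomiallyEquiv (toricCode (ZMod 7) S5') (toricCode (ZMod 7) S6') := by
  refine ⟨tPerm, tD, ?_⟩
  have key : Submodule.map Lmap (toricCode (ZMod 7) S5') = toricCode (ZMod 7) S6' := by
    unfold toricCode
    rw [Submodule.map_span]
    congr 1
    simp only [S5', S6', Set.image_insert_eq, Set.image_singleton]
    rw [hL1, hL2, hL3, hL4, hL5, hL6]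
  calc (toricCode (ZMod 7) S6' : Set (Tor → ZMod 7))
      = ↑(Submodule.map Lmap (toricCode (ZMod 7) S5')) := by rw [key]
    _ = ⇑Lmap '' ↑(toricCode (ZMod 7) S5') := Submodule.map_coe _ _
    _ = _ := rfl


/-- Over `𝔽₇`, the toric codes of `P₆⁽⁵⁾` and `P₆⁽⁶⁾` are monomially
equivalent, although the polygons `P₆⁽⁵⁾` and `P₆⁽⁶⁾` are not lattice equivalent. -/
theorem monomiallyEquiv_but_not_latticeEquiv_F7 :
    MonomiallyEquiv (toricCode (ZMod 7) (latticePts (P6 5)))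
      (toricCode (ZMod 7) (latticePts (P6 6)))
    ∧ ¬ LatticeEquiv (latticePts (P6 5)) (latticePts (P6 6)) := by
  constructor
  · rw [latt5, latt6]
    exact part1
  · rintro ⟨M, v, -, hbij⟩
    rw [latt5, latt6] at hbij
    have h1 : ((-1,-1) : ℤ×ℤ) ∈ S5' := by simp [S5']
    have h2 : ((0,0) : ℤ×ℤ) ∈ S5' := by simp [S5']
    have h3 : ((1,0) : ℤ×ℤ) ∈ S5' := by simp [S5']
    have h4 : ((2,0) : ℤ×ℤ) ∈ S5' := by simp [S5']
    have h5 : ((3,0) : ℤ×ℤ) ∈ S5' := by simp [S5']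
    have h6 : ((0,1) : ℤ×ℤ) ∈ S5' := by simp [S5']
    have inj := hbij.injOn
    have n1 : M 0 0 ≠ 0 ∨ M 1 0 ≠ 0 := by
      by_contra hc
      push_neg at hc
      exact absurd (inj h2 h3 (by simp [affMap, Prod.ext_iff, hc.1, hc.2])) (by decide)
    have n2 : M 0 1 ≠ 0 ∨ M 1 1 ≠ 0 := by
      by_contra hc
      push_neg at hc
      exact absurd (inj h6 h2 (by simp [affMap, Prod.ext_iff, hc.1, hc.2])) (by decide)
    have n3 : M 0 1 ≠ M 0 0 ∨ M 1 1 ≠ M 1 0 := by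
      by_contra hc
      push_neg at hc
      exact absurd (inj h6 h3 (by simp [affMap, Prod.ext_iff, hc.1, hc.2])) (by decide)
    have n4 : M 0 1 ≠ 2 * M 0 0 ∨ M 1 1 ≠ 2 * M 1 0 := by
      by_contra hc
      push_neg at hc
      refine absurd (inj h6 h4 ?_) (by decide)
      simp only [affMap, Prod.ext_iff, hc.1, hc.2]
      constructor <;> ring
    have n5 : M 0 1 ≠ 3 * M 0 0 ∨ M 1 1 ≠ 3 * M 1 0 := by
      by_contra hc
      push_neg at hc
      refine absurd (inj h6 h5 ?_) (by decide)
      simp only [affMap, Prod.ext_iff, hc.1, hc.2]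
      constructor <;> ring
    exact apKey M v (hbij.mapsTo h1) (hbij.mapsTo h2) (hbij.mapsTo h3)
      (hbij.mapsTo h4) (hbij.mapsTo h5) (hbij.mapsTo h6) n1 n2 n3 n4 n5
end

section
/- For every prime power q ≥ 5, the minimum distance of the toric code C_{P_6^(14)} over 𝔽_q equals (q-1)² − (3q−5) = ((q-1)−2)·((q-1)−1), where P_6^(14) = conv{(0,0),(2,0),(2,1),(0,1)}. -/
open Polynomial

section HammingWeight

variable {α β F : Type*}

lemma hammingWt_zero [Zero F] : hammingWt (0 : α → F) = 0 := by
  simp [hammingWt]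

lemma hammingWt_mul_prod [MulZeroClass F] [NoZeroDivisors F] (f : α → F) (g : β → F) :
    hammingWt (fun t : α × β => f t.1 * g t.2) = hammingWt f * hammingWt g := by
  rw [hammingWt, hammingWt, hammingWt, ← Set.ncard_prod]
  congr 1
  ext t
  simp

variable [Fintype α] [Fintype β] [Zero F]

lemma hammingWt_eq_sum_hammingWt_slice (c : α × β → F) :
    hammingWt c = ∑ x : α, hammingWt fun y => c (x, y) := by
  classical
  simp only [hammingWt, Set.ncard_eq_toFinset_card', Set.toFinset_ofPred, Finset.card_filter,
    Fintype.sum_prod_type]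

lemma le_hammingWt_of_le_hammingWt_slice (c : α × β → F) (B : Set α) (k : ℕ)
    (hk : ∀ x ∉ B, k ≤ hammingWt fun y => c (x, y)) :
    (Nat.card α - B.ncard) * k ≤ hammingWt c := by
  classical
  rw [hammingWt_eq_sum_hammingWt_slice, Nat.card_eq_fintype_card]
  calc (Fintype.card α - B.ncard) * k = ∑ _x ∈ Bᶜ.toFinset, k := by
        rw [Finset.sum_const, smul_eq_mul, Set.toFinset_compl, Finset.card_compl,
          Set.ncard_eq_toFinset_card']
    _ ≤ ∑ x ∈ Bᶜ.toFinset, hammingWt fun y => c (x, y) :=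
        Finset.sum_le_sum fun x hx => hk x (by simpa using hx)
    _ ≤ ∑ x : α, hammingWt fun y => c (x, y) :=
        Finset.sum_le_sum_of_subset (Finset.subset_univ _)

end HammingWeight

lemma minDist_eq_of_forall_le_hammingWt {F X : Type*} [Field F] {C : Submodule F (X → F)}
    {d : ℕ} (hle : ∀ c ∈ C, c ≠ 0 → d ≤ hammingWt c)
    (hex : ∃ c ∈ C, c ≠ 0 ∧ hammingWt c = d) : minDist C = d :=
  le_antisymm (Nat.sInf_le hex) (le_csInf ⟨d, hex⟩ fun _ ⟨c, hc, hc0, hw⟩ => hw ▸ hle c hc hc0)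

namespace Polynomial

lemma eval_ofFn {R : Type*} [CommSemiring R] [DecidableEq R] {n : ℕ} (v : Fin n → R) (x : R) :
    (ofFn n v).eval x = ∑ i, v i * x ^ (i : ℕ) := by
  simp [ofFn_eq_sum_monomial, eval_finsetSum, eval_monomial]

lemma natDegree_ofFn_le {R : Type*} [Semiring R] [DecidableEq R] {n : ℕ} (v : Fin (n + 1) → R) :
    (ofFn (n + 1) v).natDegree ≤ n :=
  Nat.lt_succ_iff.mp (ofFn_natDegree_lt (Nat.le_add_left 1 n) v)

variable {F : Type*} [Field F] [Finite F]

lemma ncard_units_eval_eq_zero_le (p : F[X]) (hp : p ≠ 0) :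
    {t : Fˣ | p.eval (t : F) = 0}.ncard ≤ p.natDegree := by
  classical
  calc {t : Fˣ | p.eval (t : F) = 0}.ncard ≤ (p.roots.toFinset : Set F).ncard :=
        Set.ncard_le_ncard_of_injOn Units.val
          (fun t ht => by simpa [mem_roots hp] using ht) Units.val_injective.injOn
    _ = p.roots.toFinset.card := Set.ncard_coe_finset _
    _ ≤ Multiset.card p.roots := Multiset.toFinset_card_le _
    _ ≤ p.natDegree := card_roots' p

lemma card_units_sub_natDegree_le_hammingWt (p : F[X]) (hp : p ≠ 0) :
    Nat.card Fˣ - p.natDegree ≤ hammingWt fun t : Fˣ => p.eval (t : F) := by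
  have hzeros := ncard_units_eval_eq_zero_le p hp
  have hsplit := Set.ncard_add_ncard_compl {t : Fˣ | p.eval (t : F) = 0}
  simp only [Set.compl_ofPred] at hsplit
  simp only [hammingWt, ne_eq]
  omega

lemma hammingWt_eval_prod_X_sub_C (U : Finset Fˣ) :
    hammingWt (fun t : Fˣ => (∏ u ∈ U, (X - C (u : F))).eval (t : F)) = Nat.card Fˣ - U.card := by
  have hsupp : {t : Fˣ | (∏ u ∈ U, (X - C (u : F))).eval (t : F) ≠ 0} = (↑U)ᶜ := by
    ext t
    simp [eval_prod, Finset.prod_eq_zero_iff, sub_eq_zero, Units.val_inj]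
  rw [hammingWt, hsupp, Set.ncard_compl, Set.ncard_coe_finset]

end Polynomial

lemma latticePts_rectangle {a b : ℤ} (ha : 0 ≤ a) (hb : 0 ≤ b) :
    latticePts {(0, 0), (a, 0), (a, b), (0, b)} = Set.Icc 0 a ×ˢ Set.Icc 0 b := by
  have hV : toRealPt '' ↑({(0, 0), (a, 0), (a, b), (0, b)} : Finset (ℤ × ℤ))
      = ({0, (a : ℝ)} : Set ℝ) ×ˢ ({0, (b : ℝ)} : Set ℝ) := by
    ext ⟨x, y⟩
    simp only [toRealPt, Finset.coe_insert, Finset.coe_singleton, Set.mem_image,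
      Set.mem_insert_iff, Set.mem_singleton_iff, Prod.mk.injEq, exists_eq_or_imp, Int.cast_zero,
      existsAndEq, true_and, Set.mem_prod]
    tauto
  ext ⟨x, y⟩
  simp only [latticePts, Set.mem_ofPred_eq, hV, convexHull_prod, convexHull_pair,
    segment_eq_Icc (show (0 : ℝ) ≤ a by exact_mod_cast ha),
    segment_eq_Icc (show (0 : ℝ) ≤ b by exact_mod_cast hb)]
  simp [toRealPt]

section Rectangle

variable (F : Type*) [Field F]

lemma toricCode_rectangle (a b : ℕ) :
    toricCode F (Set.Icc 0 (a : ℤ) ×ˢ Set.Icc 0 (b : ℤ)) =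
      Submodule.span F (Set.range fun k : Fin (a + 1) × Fin (b + 1) =>
        fun t : Fˣ × Fˣ => (t.1 : F) ^ (k.1 : ℕ) * (t.2 : F) ^ (k.2 : ℕ)) := by
  have hbox : Set.Icc 0 (a : ℤ) ×ˢ Set.Icc 0 (b : ℤ)
      = Set.range fun k : Fin (a + 1) × Fin (b + 1) => ((k.1 : ℤ), (k.2 : ℤ)) := by
    ext ⟨x, y⟩
    constructor
    · rintro ⟨⟨hx0, hxa⟩, hy0, hyb⟩
      exact ⟨(⟨x.toNat, by omega⟩, ⟨y.toNat, by omega⟩), by simp [hx0, hy0]⟩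
    · rintro ⟨⟨i, j⟩, hij⟩
      simp only [Prod.mk.injEq] at hij
      have hi := i.isLt
      have hj := j.isLt
      refine ⟨⟨?_, ?_⟩, ?_, ?_⟩ <;> simp only at * <;> omega
  rw [toricCode, hbox, ← Set.range_comp]
  -- `evalMonomial` at `((i : ℤ), (j : ℤ))` is `t.1 ^ i * t.2 ^ j` by unfolding `zpow`
  congr 2

variable {F}

lemma le_hammingWt_of_mem_toricCode_rectangle [Fintype F] {a b : ℕ} {c : Fˣ × Fˣ → F}
    (hc : c ∈ toricCode F (Set.Icc 0 (a : ℤ) ×ˢ Set.Icc 0 (b : ℤ))) (hc0 : c ≠ 0) :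
    (Nat.card Fˣ - a) * (Nat.card Fˣ - b) ≤ hammingWt c := by
  classical
  rw [toricCode_rectangle, Submodule.mem_span_range_iff_exists_fun] at hc
  obtain ⟨A, hcA⟩ := hc
  set row : Fin (b + 1) → F[X] := fun j => ofFn (a + 1) fun i => A (i, j)
  have hslice (x : Fˣ) :
      (fun y => c (x, y)) = fun y : Fˣ => (ofFn (b + 1) fun j => (row j).eval (x : F)).eval ↑y := by
    subst hcA
    funext y
    simp only [row, eval_ofFn, Finset.sum_apply, Pi.smul_apply, smul_eq_mul,
      Fintype.sum_prod_type, Finset.sum_mul]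
    rw [Finset.sum_comm]
    simp only [mul_assoc]
  obtain ⟨⟨i₀, j₀⟩, hA⟩ : ∃ k, A k ≠ 0 := by
    by_contra! hA
    exact hc0 (by simp [← hcA, hA])
  have hrow : row j₀ ≠ 0 := fun h =>
    hA (congr_fun ((map_eq_zero_iff _ (injective_ofFn _)).1 h) i₀)
  have hbad := (ncard_units_eval_eq_zero_le _ hrow).trans (natDegree_ofFn_le _)
  have hgood : ∀ x ∉ {x : Fˣ | (row j₀).eval (x : F) = 0},
      Nat.card Fˣ - b ≤ hammingWt fun y => c (x, y) := by
    intro x hx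
    have hfib : (ofFn (b + 1) fun j => (row j).eval (x : F)) ≠ 0 := fun h =>
      hx (congr_fun ((map_eq_zero_iff _ (injective_ofFn _)).1 h) j₀)
    rw [hslice]
    exact (Nat.sub_le_sub_left (natDegree_ofFn_le _) _).trans
      (card_units_sub_natDegree_le_hammingWt _ hfib)
  exact (Nat.mul_le_mul_right _ (by omega)).trans
    (le_hammingWt_of_le_hammingWt_slice c _ _ hgood)

lemma mem_toricCode_rectangle_of_natDegree_le {a b : ℕ} {p r : F[X]} (hp : p.natDegree ≤ a)
    (hr : r.natDegree ≤ b) :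
    (fun t : Fˣ × Fˣ => p.eval (t.1 : F) * r.eval (t.2 : F)) ∈
      toricCode F (Set.Icc 0 (a : ℤ) ×ˢ Set.Icc 0 (b : ℤ)) := by
  rw [toricCode_rectangle, Submodule.mem_span_range_iff_exists_fun]
  refine ⟨fun k => p.coeff k.1 * r.coeff k.2, ?_⟩
  funext t
  simp only [Finset.sum_apply, Pi.smul_apply, smul_eq_mul, Fintype.sum_prod_type]
  rw [eval_eq_sum_range' (Nat.lt_succ_of_le hp), eval_eq_sum_range' (Nat.lt_succ_of_le hr),
    Finset.sum_range, Finset.sum_range, Finset.sum_mul_sum]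
  simp only [mul_mul_mul_comm]

theorem minDist_toricCode_rectangle_s9 [Fintype F] {a b : ℕ} (ha : a < Nat.card Fˣ)
    (hb : b < Nat.card Fˣ) :
    minDist (toricCode F (Set.Icc 0 (a : ℤ) ×ˢ Set.Icc 0 (b : ℤ)))
      = (Nat.card Fˣ - a) * (Nat.card Fˣ - b) := by
  refine minDist_eq_of_forall_le_hammingWt
    (fun c hc hc0 => le_hammingWt_of_mem_toricCode_rectangle hc hc0) ?_
  classical
  have hunits : (Finset.univ : Finset Fˣ).card = Nat.card Fˣ := by
    rw [Finset.card_univ, Nat.card_eq_fintype_card]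
  obtain ⟨U, -, hU⟩ := Finset.exists_subset_card_eq (hunits ▸ ha.le)
  obtain ⟨V, -, hV⟩ := Finset.exists_subset_card_eq (hunits ▸ hb.le)
  set p : F[X] := ∏ u ∈ U, (X - C (u : F))
  set r : F[X] := ∏ v ∈ V, (X - C (v : F))
  have hwt : hammingWt (fun t : Fˣ × Fˣ => p.eval (t.1 : F) * r.eval (t.2 : F))
      = (Nat.card Fˣ - a) * (Nat.card Fˣ - b) := by
    rw [hammingWt_mul_prod (fun x : Fˣ => p.eval (x : F)) (fun y : Fˣ => r.eval (y : F)),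
      hammingWt_eval_prod_X_sub_C, hammingWt_eval_prod_X_sub_C, hU, hV]
  refine ⟨_, mem_toricCode_rectangle_of_natDegree_le
    (hU ▸ (natDegree_finsetProd_X_sub_C_eq_card U _).le)
    (hV ▸ (natDegree_finsetProd_X_sub_C_eq_card V _).le), fun h => ?_, hwt⟩
  rw [h, hammingWt_zero] at hwt
  exact (Nat.mul_pos (Nat.sub_pos_of_lt ha) (Nat.sub_pos_of_lt hb)).ne hwt

end Rectangle

theorem minDist_P6_14_general (q : ℕ) (hq5 : 5 ≤ q)
    (F : Type) [Field F] [Fintype F] (hF : Fintype.card F = q) :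
    (minDist (toricCode F (latticePts (P6 14))) : ℤ)
      = ((q:ℤ) - 1)^2 - (3 * (q:ℤ) - 5) := by
  have hunits : Nat.card Fˣ = q - 1 := by
    rw [Nat.card_units, Nat.card_eq_fintype_card, hF]
  have hP : latticePts (P6 14) = Set.Icc 0 ((2 : ℕ) : ℤ) ×ˢ Set.Icc 0 ((1 : ℕ) : ℤ) :=
    latticePts_rectangle (by norm_num) (by norm_num)
  rw [hP, minDist_toricCode_rectangle_s9 (by omega) (by omega), hunits,
    show q - 1 - 2 = q - 3 by omega, show q - 1 - 1 = q - 2 by omega]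
  push_cast [Nat.cast_sub (show 3 ≤ q by omega), Nat.cast_sub (show 2 ≤ q by omega)]
  ring

/-- for every prime power `q ≥ 5`, the minimum distance of `C_{P₆⁽¹⁴⁾}`
over `𝔽_q` equals `(q-1)² − (3q−5) = ((q-1)−2)((q-1)−1)`. -/
theorem minDist_P6_14 (q : ℕ) (hq : IsPrimePow q) (hq5 : 5 ≤ q)
    (F : Type) [Field F] [Fintype F] (hF : Fintype.card F = q) :
    (minDist (toricCode F (latticePts (P6 14))) : ℤ)
      = ((q:ℤ) - 1)^2 - (3 * (q:ℤ) - 5) :=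
  minDist_P6_14_general q hq5 F hF
end

section
/- For every prime power q ≥ 5, the minimum distance of the toric code C_{P_6^(13)} over 𝔽_q equals (q-1)² − 2(q-1), where P_6^(13) = conv{(0,0),(2,0),(0,2)}. -/
/-!
A codeword of `C_{dΔ}`, `dΔ = conv{(0,0),(d,0),(0,d)}`, is the evaluation on the torus `(𝔽_q^*)²`
of a bivariate polynomial of total degree at most `d`, so by the Schwartz–Zippel lemma a nonzero
codeword has at most `d(q-1)` zeros. The bound is attained by `∏ᵢ (x - αᵢ)` for distinct
`α₁, …, α_d ∈ 𝔽_q^*`, which vanishes exactly on the `d` vertical lines `x = αᵢ`. Hence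
`d(C_{dΔ}) = (q-1)² - d(q-1)` whenever `d < q - 1`; the theorem is the case `d = 2`.
-/

open Finset MvPolynomial

def stdTriangle (d : ℕ) : Finset (ℤ × ℤ) := {(0, 0), ((d : ℤ), 0), (0, (d : ℤ))}

lemma convexHull_stdTriangle_subset (d : ℕ) :
    convexHull ℝ (toRealPt '' (stdTriangle d : Set (ℤ × ℤ))) ⊆
      {x : ℝ × ℝ | 0 ≤ x.1 ∧ 0 ≤ x.2 ∧ x.1 + x.2 ≤ d} := by
  refine convexHull_min ?_ ?_
  · simp [stdTriangle, Set.insert_subset_iff, toRealPt]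
  · rintro x ⟨hx₁, hx₂, hx⟩ y ⟨hy₁, hy₂, hy⟩ a b ha hb hab
    simp only [Set.mem_ofPred_eq, Prod.fst_add, Prod.snd_add, Prod.smul_fst, Prod.smul_snd,
      smul_eq_mul]
    refine ⟨by positivity, by positivity, ?_⟩
    nlinarith

lemma latticePts_stdTriangle (d : ℕ) :
    latticePts (stdTriangle d) = {p : ℤ × ℤ | 0 ≤ p.1 ∧ 0 ≤ p.2 ∧ p.1 + p.2 ≤ d} := by
  ext ⟨a, b⟩
  constructor
  · intro h
    obtain ⟨ha, hb, hab⟩ := convexHull_stdTriangle_subset d h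
    simp only [toRealPt] at ha hb hab
    exact ⟨by exact_mod_cast ha, by exact_mod_cast hb, by exact_mod_cast hab⟩
  · rintro ⟨ha, hb, hab⟩
    -- for `d = 0` the weights `a / d`, `b / d` used below are junk, but then `a = b = 0`
    have hd : (0 : ℝ) < d ∨ (a = 0 ∧ b = 0) := by
      rcases Nat.eq_zero_or_pos d with rfl | hd
      · right; push_cast at hab; omega
      · left; exact_mod_cast hd
    have hab' : (a : ℝ) + b ≤ d := by exact_mod_cast hab
    have hweights : ∀ i ∈ (univ : Finset (Fin 3)),
        0 ≤ ![1 - ((a : ℝ) + b) / d, (a : ℝ) / d, (b : ℝ) / d] i := by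
      have : (0 : ℝ) ≤ a := by exact_mod_cast ha
      have : (0 : ℝ) ≤ b := by exact_mod_cast hb
      intro i _
      fin_cases i <;> simp only [Fin.reduceFinMk, Matrix.cons_val, sub_nonneg]
      · rcases hd with hd | ⟨rfl, rfl⟩
        · exact (div_le_one hd).mpr hab'
        · simp
      all_goals positivity
    have hcomb := (convex_convexHull ℝ (toRealPt '' (stdTriangle d : Set (ℤ × ℤ)))).sum_mem
      hweights (by simp [Fin.sum_univ_three]; ring)
      (z := ![toRealPt (0, 0), toRealPt (d, 0), toRealPt (0, d)])
      (fun i _ ↦ subset_convexHull ℝ _ (by fin_cases i <;> simp [stdTriangle]))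
    show toRealPt (a, b) ∈ convexHull ℝ _
    convert hcomb using 1
    rcases hd with hd | ⟨rfl, rfl⟩
    · simp [Fin.sum_univ_three, toRealPt]
      constructor <;> field_simp
    · simp [Fin.sum_univ_three, toRealPt]

lemma hammingWt_add_card_zeros {X F : Type*} [Fintype X] [Zero F] [DecidableEq F] (c : X → F) :
    hammingWt c + #{x | c x = 0} = Fintype.card X := by
  rw [hammingWt, Set.ncard_eq_toFinset_card', Set.toFinset_ofPred, add_comm,
    card_filter_add_card_filter_not, card_univ]

section
variable {F : Type*} [Field F]

lemma evalMonomial_natCast (a b : ℕ) (t : Fˣ × Fˣ) :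
    evalMonomial ((a : ℤ), (b : ℤ)) t = eval ![(t.1 : F), t.2] (X 0 ^ a * X 1 ^ b) := by
  simp [evalMonomial]

lemma exists_totalDegree_le_of_mem_toricCode {S : Set (ℤ × ℤ)} {d : ℕ}
    (hS : S ⊆ {p | 0 ≤ p.1 ∧ 0 ≤ p.2 ∧ p.1 + p.2 ≤ d}) {c : Fˣ × Fˣ → F}
    (hc : c ∈ toricCode F S) :
    ∃ f : MvPolynomial (Fin 2) F, f.totalDegree ≤ d ∧ c = fun t ↦ eval ![(t.1 : F), t.2] f := by
  induction hc using Submodule.span_induction with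
  | mem c hc =>
    obtain ⟨⟨a, b⟩, hm, rfl⟩ := hc
    obtain ⟨ha, hb, hab⟩ := hS hm
    lift a to ℕ using ha
    lift b to ℕ using hb
    refine ⟨X 0 ^ a * X 1 ^ b, ?_, funext (evalMonomial_natCast a b)⟩
    calc (X 0 ^ a * X 1 ^ b : MvPolynomial (Fin 2) F).totalDegree
        ≤ a + b := (totalDegree_mul _ _).trans (by simp only [totalDegree_X_pow, le_refl])
      _ ≤ d := by simpa only [← Nat.cast_add, Nat.cast_le] using hab
  | zero => exact ⟨0, by simp, by ext; simp⟩
  | add c₁ c₂ _ _ ih₁ ih₂ =>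
    obtain ⟨f₁, hf₁, rfl⟩ := ih₁
    obtain ⟨f₂, hf₂, rfl⟩ := ih₂
    exact ⟨f₁ + f₂, (totalDegree_add _ _).trans (max_le hf₁ hf₂), by ext; simp⟩
  | smul a c _ ih =>
    obtain ⟨f, hf, rfl⟩ := ih
    exact ⟨a • f, (totalDegree_smul_le _ _).trans hf, by ext; simp⟩

lemma mem_toricCode_of_natDegree_le {S : Set (ℤ × ℤ)} {d : ℕ}
    (hS : ∀ k ≤ d, ((k : ℤ), (0 : ℤ)) ∈ S) {g : Polynomial F} (hg : g.natDegree ≤ d) :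
    (fun t : Fˣ × Fˣ ↦ g.eval (t.1 : F)) ∈ toricCode F S := by
  have hsum : (fun t : Fˣ × Fˣ ↦ g.eval (t.1 : F)) =
      ∑ k ∈ range (d + 1), g.coeff k • evalMonomial ((k : ℤ), (0 : ℤ)) := by
    ext t
    simp [Polynomial.eval_eq_sum_range' (Nat.lt_succ_of_le hg), evalMonomial]
  rw [hsum]
  refine Submodule.sum_mem _ fun k hk ↦ Submodule.smul_mem _ _ (Submodule.subset_span ?_)
  exact ⟨_, hS k (Nat.le_of_lt_succ (mem_range.mp hk)), rfl⟩

variable [Fintype F] [DecidableEq F]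

lemma card_zeros_torus_le {f : MvPolynomial (Fin 2) F} (hf : f ≠ 0) :
    #{t : Fˣ × Fˣ | eval ![(t.1 : F), t.2] f = 0} ≤ f.totalDegree * (Fintype.card F - 1) := by
  set S : Finset F := univ.erase 0
  have hS : #S = Fintype.card F - 1 := by rw [card_erase_of_mem (mem_univ _), card_univ]
  have hS₀ : 0 < #S := card_pos.mpr ⟨1, by simp [S]⟩
  have hzeros : #{t : Fˣ × Fˣ | eval ![(t.1 : F), t.2] f = 0} =
      #{x ∈ Fintype.piFinset fun _ ↦ S | eval x f = 0} := by
    refine card_bij (fun t _ ↦ ![(t.1 : F), t.2]) ?_ ?_ ?_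
    · intro t ht
      simp only [mem_filter, mem_univ, true_and] at ht
      simp [S, Fintype.mem_piFinset, Fin.forall_fin_two, ht]
    · intro t _ t' _ h
      have h₀ := congrFun h 0
      have h₁ := congrFun h 1
      simp only [Matrix.cons_val_zero, Matrix.cons_val_one] at h₀ h₁
      exact Prod.ext (Units.ext h₀) (Units.ext h₁)
    · intro x hx
      simp only [mem_filter, Fintype.mem_piFinset, Fin.forall_fin_two, S, mem_erase, mem_univ,
        and_true] at hx
      obtain ⟨⟨h₀, h₁⟩, hx⟩ := hx
      have hx' : ![x 0, x 1] = x := by ext i; fin_cases i <;> rfl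
      exact ⟨(Units.mk0 _ h₀, Units.mk0 _ h₁), by simpa [hx'] using hx, hx'⟩
  have hsz := schwartz_zippel_totalDegree hf S
  rw [div_le_div_iff₀ (by positivity) (by positivity)] at hsz
  have hsz' : #{x ∈ Fintype.piFinset fun _ ↦ S | eval x f = 0} * #S ≤
      f.totalDegree * #S * #S := by
    rw [mul_assoc, ← sq]; exact_mod_cast hsz
  rw [hzeros, ← hS]
  exact Nat.le_of_mul_le_mul_right hsz' hS₀

lemma card_zeros_prod_X_sub_C (A : Finset Fˣ) :
    #{t : Fˣ × Fˣ | (∏ a ∈ A, (Polynomial.X - Polynomial.C (a : F))).eval (t.1 : F) = 0} =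
      #A * (Fintype.card F - 1) := by
  have : ({t : Fˣ × Fˣ | (∏ a ∈ A, (Polynomial.X - Polynomial.C (a : F))).eval (t.1 : F) = 0} :
      Finset (Fˣ × Fˣ)) = A ×ˢ univ := by
    ext t
    simp [Polynomial.eval_prod, prod_eq_zero_iff, sub_eq_zero, Units.val_inj]
  rw [this, card_product, card_univ, Fintype.card_units]

end

theorem minDist_toricCode_stdTriangle {F : Type*} [Field F] [Fintype F] {d : ℕ}
    (hd : d < Fintype.card F - 1) :
    minDist (toricCode F (latticePts (stdTriangle d))) =
      (Fintype.card F - 1) * (Fintype.card F - 1 - d) := by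
  classical
  set q := Fintype.card F with hq
  have hlen : Fintype.card (Fˣ × Fˣ) = (q - 1) * (q - 1) := by simp [q, Fintype.card_units]
  have hsplit : (q - 1) * (q - 1 - d) + d * (q - 1) = (q - 1) * (q - 1) := by
    rw [mul_comm d, ← Nat.mul_add, Nat.sub_add_cancel hd.le]
  refine IsLeast.csInf_eq ⟨?_, ?_⟩
  · obtain ⟨A, -, hA⟩ := exists_subset_card_eq (s := (univ : Finset Fˣ)) (n := d)
      (by rw [card_univ, Fintype.card_units]; exact hd.le)
    set g := ∏ a ∈ A, (Polynomial.X - Polynomial.C (a : F))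
    have hwt : hammingWt (fun t : Fˣ × Fˣ ↦ g.eval (t.1 : F)) = (q - 1) * (q - 1 - d) := by
      have := hammingWt_add_card_zeros fun t : Fˣ × Fˣ ↦ g.eval (t.1 : F)
      rw [card_zeros_prod_X_sub_C, ← hq, hlen, hA] at this
      omega
    refine ⟨_, mem_toricCode_of_natDegree_le (d := d) ?_ (by simp [g, hA]), ?_, hwt⟩
    · intro k hk
      rw [latticePts_stdTriangle]
      exact ⟨by positivity, le_rfl, by simpa using hk⟩
    · intro h
      rw [h] at hwt
      simp [hammingWt] at hwt
      omega
  · rintro w ⟨c, hc, hc0, rfl⟩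
    obtain ⟨f, hf, rfl⟩ := exists_totalDegree_le_of_mem_toricCode (latticePts_stdTriangle d).le hc
    have hf0 : f ≠ 0 := by rintro rfl; exact hc0 (by ext; simp)
    have hzeros := (card_zeros_torus_le hf0).trans (Nat.mul_le_mul_right (q - 1) hf)
    have := hammingWt_add_card_zeros fun t : Fˣ × Fˣ ↦ eval ![(t.1 : F), t.2] f
    rw [hlen] at this
    omega

theorem minDist_P6_13_general (q : ℕ) (hq5 : 5 ≤ q)
    (F : Type) [Field F] [Fintype F] (hF : Fintype.card F = q) :
    (minDist (toricCode F (latticePts (P6 13))) : ℤ)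
      = ((q:ℤ) - 1)^2 - 2 * ((q:ℤ) - 1) := by
  have hd : 2 < q - 1 := by omega
  rw [show P6 13 = stdTriangle 2 from rfl, minDist_toricCode_stdTriangle (hF ▸ hd), hF,
    Nat.cast_mul, Nat.cast_sub hd.le, Nat.cast_sub (by omega : 1 ≤ q)]
  ring

/-- for every prime power `q ≥ 5`, the minimum distance of `C_{P₆⁽¹³⁾}`
over `𝔽_q` equals `(q-1)² − 2(q-1)`. -/
theorem minDist_P6_13 (q : ℕ) (hq : IsPrimePow q) (hq5 : 5 ≤ q)
    (F : Type) [Field F] [Fintype F] (hF : Fintype.card F = q) :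
    (minDist (toricCode F (latticePts (P6 13))) : ℤ)
      = ((q:ℤ) - 1)^2 - 2 * ((q:ℤ) - 1) :=
  minDist_P6_13_general q hq5 F hF
end

section
/- For every prime power q ≥ 5, the number of codewords of the toric code C_{P_6^(3)} over 𝔽_q having Hamming weight exactly (q-1)² − 2(q-1) equals 4·binom(q-1,2)·(q-1) = 2(q-1)²(q-2), where P_6^(3) = conv{(0,0),(3,0),(1,1),(0,1)}. -/
open Polynomial Finset

theorem le_of_mem_latticePts {V : Finset (ℤ × ℤ)} {p : ℤ × ℤ} (hp : p ∈ latticePts V)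
    (a b c : ℤ) (hV : ∀ v ∈ V, a * v.1 + b * v.2 ≤ c) : a * p.1 + b * p.2 ≤ c := by
  have hlin : IsLinearMap ℝ fun z : ℝ × ℝ => (a : ℝ) * z.1 + b * z.2 :=
    ⟨fun _ _ => by simp only [Prod.fst_add, Prod.snd_add]; ring,
      fun _ _ => by simp only [Prod.smul_fst, Prod.smul_snd, smul_eq_mul]; ring⟩
  have hsub : toRealPt '' (V : Set (ℤ × ℤ)) ⊆ {z | (a : ℝ) * z.1 + b * z.2 ≤ c} := by
    rintro _ ⟨v, hv, rfl⟩
    change (a : ℝ) * v.1 + b * v.2 ≤ c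
    exact_mod_cast hV v hv
  have : (a : ℝ) * p.1 + b * p.2 ≤ c := convexHull_min hsub (convex_halfSpace_le hlin _) hp
  exact_mod_cast this

theorem mk_mem_latticePts {V : Finset (ℤ × ℤ)} {k y : ℤ} (h₀ : (0, y) ∈ V) (hk : (k, y) ∈ V)
    {i : ℤ} (hi₀ : 0 ≤ i) (hik : i ≤ k) : (i, y) ∈ latticePts V := by
  have hseg : toRealPt (i, y) ∈ segment ℝ (toRealPt (0, y)) (toRealPt (k, y)) := by
    simp only [toRealPt, Int.cast_zero]
    rw [← Prod.image_mk_segment_left, segment_eq_Icc (by exact_mod_cast hi₀.trans hik)]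
    exact ⟨i, ⟨by exact_mod_cast hi₀, by exact_mod_cast hik⟩, rfl⟩
  exact segment_subset_convexHull (Set.mem_image_of_mem _ h₀) (Set.mem_image_of_mem _ hk) hseg

theorem latticePts_P6_three : latticePts (P6 3) =
    (fun i : ℕ => ((i : ℤ), (0 : ℤ))) '' Set.Iio 4 ∪
      (fun i : ℕ => ((i : ℤ), (1 : ℤ))) '' Set.Iio 2 := by
  ext ⟨x, y⟩
  constructor
  · intro hp
    have h₁ := le_of_mem_latticePts hp 0 (-1) 0 (by decide)
    have h₂ := le_of_mem_latticePts hp 0 1 1 (by decide)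
    have h₃ := le_of_mem_latticePts hp (-1) 0 0 (by decide)
    have h₄ := le_of_mem_latticePts hp 1 2 3 (by decide)
    simp only at h₁ h₂ h₃ h₄
    obtain ⟨i, rfl⟩ : ∃ i : ℕ, (i : ℤ) = x := ⟨x.toNat, by omega⟩
    obtain rfl | rfl : y = 0 ∨ y = 1 := by omega
    · exact Or.inl ⟨i, by simp only [Set.mem_Iio]; omega, rfl⟩
    · exact Or.inr ⟨i, by simp only [Set.mem_Iio]; omega, rfl⟩
  · rintro (⟨i, hi, hxy⟩ | ⟨i, hi, hxy⟩) <;> rw [← hxy] <;> simp only [Set.mem_Iio] at hi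
    · exact mk_mem_latticePts (k := 3) (by decide) (by decide) (by positivity) (by omega)
    · exact mk_mem_latticePts (k := 1) (by decide) (by decide) (by positivity) (by omega)

section ToricCode

variable (F : Type*) [Field F]

def rowEval (j : ℕ) : F[X] →ₗ[F] (Fˣ × Fˣ → F) where
  toFun g t := (t.2 : F) ^ j * g.eval (t.1 : F)
  map_add' g h := by funext t; simp [mul_add]
  map_smul' c g := by funext t; simp [mul_left_comm]

variable {F}

theorem evalMonomial_natCast_s15 (i j : ℕ) :
    evalMonomial ((i : ℤ), (j : ℤ)) = rowEval F j (X ^ i) := by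
  funext t
  simp [evalMonomial, rowEval, mul_comm]

theorem toricCode_union (S T : Set (ℤ × ℤ)) :
    toricCode F (S ∪ T) = toricCode F S ⊔ toricCode F T := by
  rw [toricCode, Set.image_union, Submodule.span_union]; rfl

theorem toricCode_row (a j : ℕ) :
    toricCode F ((fun i : ℕ => ((i : ℤ), (j : ℤ))) '' Set.Iio a) =
      (degreeLT F a).map (rowEval F j) := by
  classical
  rw [toricCode, degreeLT_eq_span_X_pow, Submodule.map_span, Set.image_image, coe_image, coe_range,
    Set.image_image]
  simp only [evalMonomial_natCast_s15]

theorem mem_toricCode_P6_three {c : Fˣ × Fˣ → F} :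
    c ∈ toricCode F (latticePts (P6 3)) ↔
      ∃ g ∈ degreeLT F 4, ∃ h ∈ degreeLT F 2, rowEval F 0 g + rowEval F 1 h = c := by
  have row₀ := toricCode_row (F := F) 4 0
  have row₁ := toricCode_row (F := F) 2 1
  simp only [Nat.cast_zero, Nat.cast_one] at row₀ row₁
  rw [latticePts_P6_three, toricCode_union, row₀, row₁, Submodule.mem_sup]
  simp only [Submodule.mem_map]
  constructor
  · rintro ⟨_, ⟨g, hg, rfl⟩, _, ⟨h, hh, rfl⟩, rfl⟩
    exact ⟨g, hg, h, hh, rfl⟩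
  · rintro ⟨g, hg, h, hh, rfl⟩
    exact ⟨_, ⟨g, hg, rfl⟩, _, ⟨h, hh, rfl⟩, rfl⟩

end ToricCode

section HammingWeight

variable {α β M : Type*} [Zero M]

theorem hammingWt_eq_card_filter [Fintype α] [DecidableEq M] (c : α → M) :
    hammingWt c = #{x | c x ≠ 0} := by
  rw [hammingWt, Set.ncard_eq_toFinset_card', Set.toFinset_ofPred]

theorem card_filter_univ_prod [Fintype α] [Fintype β] (p : α × β → Prop) [DecidablePred p] :
    #{t | p t} = ∑ a, #{b | p (a, b)} := by
  simp only [card_filter]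
  exact Fintype.sum_prod_type _

theorem hammingWt_prod [Fintype α] [Fintype β] (c : α × β → M) :
    hammingWt c = ∑ a, hammingWt fun b => c (a, b) := by
  classical
  simp only [hammingWt_eq_card_filter]
  exact card_filter_univ_prod _

theorem hammingWt_comp_fst_s15 [Fintype β] (f : α → M) :
    hammingWt (fun t : α × β => f t.1) = hammingWt f * Fintype.card β := by
  rw [hammingWt, hammingWt, ← Nat.card_eq_fintype_card, ← Set.ncard_univ, ← Set.ncard_prod,
    Set.prod_univ]
  rfl

end HammingWeight

section UnitRoots

variable {F : Type*} [Field F] [Fintype F] [DecidableEq F]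

def unitRoots (g : F[X]) : Finset Fˣ := {u | g.IsRoot u}

theorem hammingWt_rowEval_zero (g : F[X]) :
    hammingWt (rowEval F 0 g) = (Fintype.card Fˣ - #(unitRoots g)) * Fintype.card Fˣ := by
  have : rowEval F 0 g = fun t => g.eval (t.1 : F) := by funext t; simp [rowEval]
  rw [this, hammingWt_comp_fst_s15 (fun u : Fˣ => g.eval (u : F)), hammingWt_eq_card_filter,
    unitRoots, ← card_compl, compl_filter]
  rfl

theorem le_hammingWt_affine {a b : F} (hb : b ≠ 0) :
    Fintype.card Fˣ - 1 ≤ hammingWt fun y : Fˣ => a + y * b := by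
  have hzeros : #{y : Fˣ | a + y * b = 0} ≤ 1 :=
    card_le_one.2 fun y hy z hz => by
      simp only [mem_filter, mem_univ, true_and] at hy hz
      exact Units.ext (mul_right_cancel₀ hb (add_left_cancel (hy.trans hz.symm)))
  rw [hammingWt_eq_card_filter, ← compl_filter, card_compl]
  omega

theorem le_hammingWt_rowEval_add (g h : F[X]) :
    (Fintype.card Fˣ - #(unitRoots h)) * (Fintype.card Fˣ - 1) ≤
      hammingWt (rowEval F 0 g + rowEval F 1 h) := by
  rw [hammingWt_prod, ← card_compl, ← smul_eq_mul]
  refine (card_nsmul_le_sum _ _ _ fun x hx => ?_).trans (sum_le_sum_of_subset (subset_univ _))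
  have hb : h.eval (x : F) ≠ 0 := by simpa [unitRoots] using hx
  simpa [rowEval, mul_comm] using le_hammingWt_affine (a := g.eval (x : F)) hb

theorem card_unitRoots_le_natDegree {g : F[X]} (hg : g ≠ 0) : #(unitRoots g) ≤ g.natDegree := by
  rw [← card_map ⟨Units.val, Units.val_injective⟩]
  refine card_le_degree_of_subset_roots fun x hx => ?_
  obtain ⟨u, hu, rfl⟩ := mem_map.1 hx
  simpa [unitRoots, hg] using hu

theorem unitRoots_mul (p q : F[X]) : unitRoots (p * q) = unitRoots p ∪ unitRoots q := by
  ext u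
  simp [unitRoots]

theorem unitRoots_nodal (e : Finset Fˣ) : unitRoots (Lagrange.nodal e ((↑) : Fˣ → F)) = e := by
  ext u
  simp [unitRoots, Lagrange.eval_nodal, prod_eq_zero_iff, sub_eq_zero, Units.val_inj]

theorem nodal_unitRoots_dvd (g : F[X]) : Lagrange.nodal (unitRoots g) ((↑) : Fˣ → F) ∣ g :=
  prod_dvd_of_coprime ((pairwise_coprime_X_sub_C Units.val_injective).set_pairwise _)
    fun u hu => dvd_iff_isRoot.2 (by simpa [unitRoots] using hu)

theorem rowEval_zero_injOn : Set.InjOn (rowEval F 0) {g | g.degree < Fintype.card Fˣ} := by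
  intro g₁ h₁ g₂ h₂ heq
  refine eq_of_degree_sub_lt_of_eval_finset_eq
    (s := univ.map ⟨Units.val, Units.val_injective⟩) ?_ fun x hx => ?_
  · rw [card_map, card_univ]
    exact (degree_sub_le _ _).trans_lt (max_lt h₁ h₂)
  · obtain ⟨u, -, rfl⟩ := mem_map.1 hx
    simpa [rowEval] using congrFun heq (u, 1)

end UnitRoots

section LinPoly

variable {F : Type*} [Field F]

noncomputable def linPoly (cd : F × F) : F[X] := C cd.1 * X + C cd.2

theorem linPoly_injective : Function.Injective (linPoly (F := F)) := by
  intro cd cd' h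
  have h₁ := congrArg (coeff · 1) h
  have h₀ := congrArg (coeff · 0) h
  simp only [linPoly, coeff_add, coeff_C_mul_X, coeff_C] at h₁ h₀
  exact Prod.ext (by simpa using h₁) (by simpa using h₀)

theorem linPoly_ne_zero {cd : F × F} (h : cd ≠ 0) : linPoly cd ≠ 0 := by
  rw [← (linPoly_injective (F := F)).ne_iff] at h
  simpa [linPoly] using h

theorem natDegree_linPoly_le (cd : F × F) : (linPoly cd).natDegree ≤ 1 := by
  unfold linPoly; compute_degree

end LinPoly

section Counting

variable {F : Type*} [Field F] [Fintype F] [DecidableEq F]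

theorem mem_unitRoots_linPoly {c d : F} {u : Fˣ} :
    u ∈ unitRoots (linPoly (c, d)) ↔ c * u + d = 0 := by
  simp [unitRoots, linPoly]

noncomputable def linearCofactors (e : Finset Fˣ) : Finset (F × F) :=
  {cd | cd ≠ 0 ∧ unitRoots (linPoly cd) ⊆ e}

theorem unitRoots_linPoly_subset_iff {c : F} (hc : c ≠ 0) (d : F) (e : Finset Fˣ) :
    unitRoots (linPoly (c, d)) ⊆ e ↔ d ∈ insert 0 (e.image fun u : Fˣ => -(c * (u : F))) := by
  simp only [subset_iff, mem_unitRoots_linPoly, mem_insert, mem_image]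
  constructor
  · intro h
    by_cases hd : d = 0
    · exact Or.inl hd
    · refine Or.inr ⟨Units.mk0 (-d / c) (by simp [hd, hc]), h ?_, ?_⟩ <;>
        simp [mul_div_cancel₀ _ hc]
  · rintro (rfl | ⟨w, hw, rfl⟩) u hu
    · simp [hc] at hu
    · have : c * u = c * w := by linear_combination hu
      rwa [Units.ext (mul_left_cancel₀ hc this)]

theorem card_linearCofactors (e : Finset Fˣ) :
    #(linearCofactors e) = Fintype.card Fˣ * (#e + 2) := by
  have hzero : #{d : F | ((0 : F), d) ≠ 0 ∧ unitRoots (linPoly (0, d)) ⊆ e} = Fintype.card Fˣ := by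
    have : ∀ d : F, d ≠ 0 → unitRoots (linPoly (0, d)) = ∅ := fun d hd => by
      ext u; simp [mem_unitRoots_linPoly, hd]
    rw [Fintype.card_units, ← card_univ, ← card_erase_of_mem (mem_univ 0), ← filter_ne']
    congr 1
    ext d
    by_cases hd : d = 0 <;> simp [hd, this]
  have hunit : ∀ c ≠ (0 : F),
      #{d : F | (c, d) ≠ 0 ∧ unitRoots (linPoly (c, d)) ⊆ e} = #e + 1 := by
    intro c hc
    have hinj : Function.Injective fun u : Fˣ => -(c * u) := fun u w h =>
      Units.ext (mul_left_cancel₀ hc (neg_injective h))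
    have h0 : (0 : F) ∉ e.image fun u : Fˣ => -(c * (u : F)) := by simp [hc]
    rw [← card_image_of_injective e hinj, ← card_insert_of_notMem h0]
    congr 1
    ext d
    simp only [mem_filter, mem_univ, true_and, ne_eq, Prod.mk_eq_zero, hc, false_and,
      not_false_eq_true, unitRoots_linPoly_subset_iff hc]
  rw [linearCofactors, card_filter_univ_prod, ← add_sum_erase _ _ (mem_univ 0), hzero,
    sum_congr rfl fun c hc => hunit c (ne_of_mem_erase hc), sum_const,
    card_erase_of_mem (mem_univ 0), card_univ, ← Fintype.card_units, smul_eq_mul]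
  ring

theorem unitRoots_nodal_mul {e : Finset Fˣ} {l : F[X]} (hl : unitRoots l ⊆ e) :
    unitRoots (Lagrange.nodal e ((↑) : Fˣ → F) * l) = e := by
  rw [unitRoots_mul, unitRoots_nodal, union_eq_left.2 hl]

noncomputable def nodalMulLinear (x : Σ _ : Finset Fˣ, F × F) : F[X] :=
  Lagrange.nodal x.1 ((↑) : Fˣ → F) * linPoly x.2

noncomputable def nodalParams (k : ℕ) : Finset (Σ _ : Finset Fˣ, F × F) :=
  (univ.powersetCard k).sigma linearCofactors

theorem nodalMulLinear_injOn (k : ℕ) :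
    Set.InjOn nodalMulLinear (↑(nodalParams (F := F) k) : Set (Σ _ : Finset Fˣ, F × F)) := by
  rintro ⟨e, cd⟩ hx ⟨e', cd'⟩ hx' h
  simp only [nodalParams, coe_sigma, Set.mem_sigma_iff, mem_coe, linearCofactors,
    mem_filter] at hx hx'
  obtain rfl : e = e' := by
    rw [← unitRoots_nodal_mul hx.2.2.2, ← unitRoots_nodal_mul hx'.2.2.2]
    exact congrArg unitRoots h
  obtain rfl := linPoly_injective (mul_left_cancel₀ Lagrange.nodal_ne_zero h)
  rfl

theorem image_nodalMulLinear (k : ℕ) :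
    nodalMulLinear '' (↑(nodalParams (F := F) k) : Set (Σ _ : Finset Fˣ, F × F)) =
      {g | g ≠ 0 ∧ g.degree < ↑(k + 2) ∧ #(unitRoots g) = k} := by
  ext g
  constructor
  · rintro ⟨⟨e, cd⟩, hx, rfl⟩
    simp only [nodalParams, coe_sigma, Set.mem_sigma_iff, mem_coe, mem_powersetCard_univ,
      linearCofactors, mem_filter] at hx
    obtain ⟨he, -, hcd, hroots⟩ := hx
    have hl := linPoly_ne_zero hcd
    refine ⟨mul_ne_zero Lagrange.nodal_ne_zero hl, degree_le_natDegree.trans_lt ?_, ?_⟩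
    · rw [nodalMulLinear, natDegree_mul Lagrange.nodal_ne_zero hl, Lagrange.natDegree_nodal, he]
      exact_mod_cast Nat.add_lt_add_left (Nat.lt_succ_of_le (natDegree_linPoly_le cd)) k
    · rw [nodalMulLinear, unitRoots_nodal_mul hroots, he]
  · rintro ⟨hg, hdeg, hk⟩
    obtain ⟨l, hgl⟩ := nodal_unitRoots_dvd g
    have hl : l ≠ 0 := by rintro rfl; exact hg (by simpa using hgl)
    have hdeg_l : l.natDegree ≤ 1 := by
      have := (natDegree_lt_iff_degree_lt hg).2 hdeg
      rw [hgl, natDegree_mul Lagrange.nodal_ne_zero hl, Lagrange.natDegree_nodal, hk] at this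
      omega
    obtain ⟨c, d, rfl⟩ := exists_eq_X_add_C_of_natDegree_le_one hdeg_l
    refine ⟨⟨unitRoots g, (c, d)⟩, ?_, hgl.symm⟩
    simp only [nodalParams, coe_sigma, Set.mem_sigma_iff, mem_coe, mem_powersetCard_univ,
      linearCofactors, mem_filter, mem_univ, true_and]
    refine ⟨hk, fun h0 => hl ?_, ?_⟩
    · simp [(Prod.mk_eq_zero.1 h0).1, (Prod.mk_eq_zero.1 h0).2]
    · rw [hgl, unitRoots_mul]
      exact subset_union_right

theorem ncard_setOf_card_unitRoots (k : ℕ) :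
    {g : F[X] | g ≠ 0 ∧ g.degree < ↑(k + 2) ∧ #(unitRoots g) = k}.ncard =
      (Fintype.card Fˣ).choose k * (Fintype.card Fˣ * (k + 2)) := by
  rw [← image_nodalMulLinear, (nodalMulLinear_injOn k).ncard_image,
    Set.ncard_coe_finset, nodalParams, card_sigma,
    sum_congr rfl fun e he => by rw [card_linearCofactors, (mem_powersetCard_univ.1 he)],
    sum_const, card_powersetCard, card_univ, smul_eq_mul]

end Counting

theorem codewords_P6_three_hammingWt_eq_image {F : Type*} [Field F] [Fintype F] [DecidableEq F]
    (hn : 2 < Fintype.card Fˣ) :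
    {c | c ∈ toricCode F (latticePts (P6 3)) ∧
        hammingWt c = (Fintype.card Fˣ - 2) * Fintype.card Fˣ} =
      rowEval F 0 '' {g | g ≠ 0 ∧ g.degree < 4 ∧ #(unitRoots g) = 2} := by
  ext c
  simp only [Set.mem_image, mem_toricCode_P6_three]
  constructor
  · rintro ⟨⟨g, hg, h, hh, rfl⟩, hw⟩
    obtain rfl : h = 0 := by
      by_contra hne
      have hroots : #(unitRoots h) ≤ 1 := (card_unitRoots_le_natDegree hne).trans
        (Nat.lt_succ_iff.1 ((natDegree_lt_iff_degree_lt hne).2 (mem_degreeLT.1 hh)))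
      have hlow := (le_hammingWt_rowEval_add g h).trans_eq hw
      obtain ⟨m, hm⟩ : ∃ m, Fintype.card Fˣ = m + 2 := ⟨_, (Nat.sub_add_cancel hn.le).symm⟩
      rw [hm, Nat.add_sub_cancel, show m + 2 - 1 = m + 1 by omega] at hlow
      have : (m + 1) * (m + 1) ≤ (m + 2 - #(unitRoots h)) * (m + 1) :=
        Nat.mul_le_mul_right _ (by omega)
      nlinarith
    rw [map_zero, add_zero, hammingWt_rowEval_zero] at hw
    have hk : #(unitRoots g) = 2 := by
      have := Nat.eq_of_mul_eq_mul_right (by omega) hw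
      have := card_le_univ (unitRoots g)
      omega
    refine ⟨g, ⟨fun hg0 => ?_, mem_degreeLT.1 hg, hk⟩, by simp⟩
    subst hg0
    have : unitRoots (0 : F[X]) = univ := by ext u; simp [unitRoots]
    rw [this, card_univ] at hk
    omega
  · rintro ⟨g, ⟨-, hdeg, hk⟩, rfl⟩
    exact ⟨⟨g, mem_degreeLT.2 hdeg, 0, zero_mem _, by rw [map_zero, add_zero]⟩,
      by rw [hammingWt_rowEval_zero, hk]⟩

theorem codeword_count_P6_3_general (q : ℕ) (hq5 : 5 ≤ q)
    (F : Type) [Field F] [Fintype F] (hF : Fintype.card F = q) :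
    Set.ncard {c : (Fˣ × Fˣ) → F | c ∈ toricCode F (latticePts (P6 3)) ∧
        hammingWt c = (q - 1)^2 - 2 * (q - 1)}
      = 4 * Nat.choose (q - 1) 2 * (q - 1) := by
  classical
  have hn : Fintype.card Fˣ = q - 1 := by rw [Fintype.card_units, hF]
  have hweight : (q - 1) ^ 2 - 2 * (q - 1) = (Fintype.card Fˣ - 2) * Fintype.card Fˣ := by
    rw [hn, Nat.sub_mul, sq]
  have hinj : Set.InjOn (rowEval F 0) {g | g ≠ 0 ∧ g.degree < 4 ∧ #(unitRoots g) = 2} :=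
    rowEval_zero_injOn.mono fun g hg => hg.2.1.trans_le (by rw [hn]; exact_mod_cast (by omega))
  have hcount := ncard_setOf_card_unitRoots (F := F) 2
  simp only [Nat.reduceAdd, Nat.cast_ofNat] at hcount
  rw [hweight, codewords_P6_three_hammingWt_eq_image (by omega), hinj.ncard_image, hcount, hn]
  ring

/-- for every prime power `q ≥ 5`, the number of codewords of `C_{P₆⁽³⁾}`
over `𝔽_q` of Hamming weight exactly `(q-1)² − 2(q-1)` equals `4·C(q-1,2)·(q-1)`. -/
theorem codeword_count_P6_3 (q : ℕ) (hq : IsPrimePow q) (hq5 : 5 ≤ q)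
    (F : Type) [Field F] [Fintype F] (hF : Fintype.card F = q) :
    Set.ncard {c : (Fˣ × Fˣ) → F | c ∈ toricCode F (latticePts (P6 3)) ∧
        hammingWt c = (q - 1)^2 - 2 * (q - 1)}
      = 4 * Nat.choose (q - 1) 2 * (q - 1) :=
  codeword_count_P6_3_general q hq5 F hF
end
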